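/- arXiv:1711.04977 — 6 statements merged into one kernel-verified Lean document; each statement's English description precedes it below -/
import Mathlib

section
/- Let f ∈ L^∞(ℝ²) be continuous at a point (x,y) ∈ ℝ². Suppose φ: ℝ² → ℝ is a bounded continuous kernel with Σ_{k,j} φ(u−k, v−j) = 1 for all (u,v), M₂(φ) < ∞, and the tail condition: Σ over (k,j) with (k−u)² + (j−v)² > R² of |φ(u−k,v−j)|((k−u)²+(j−v)²) → 0 as R → ∞, uniformly in (u,v). Let {a_k}, {b_k}, {c_j}, {d_j} be bounded real sequences with a_k < b_k and c_j < d_j. Then the bivariate Kantorovich sampling operators K_w^φ f(x,y) := Σ_{k,j} (w²/((b_k−a_k)(d_j−c_j))) φ(wx−k, wy−j) ∫_{(k+a_k)/w}^{(k+b_k)/w} ∫_{(j+c_j)/w}^{(j+d_j)/w} f(u,v) dv du satisfy lim_{w→∞} K_w^φ f(x,y) = f(x,y). -/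
open Filter MeasureTheory

/-- The bivariate generalized Kantorovich sampling operator. -/
noncomputable def kantorovich (φ : ℝ × ℝ → ℝ) (a b c d : ℤ → ℝ) (f : ℝ × ℝ → ℝ)
    (w x y : ℝ) : ℝ :=
  ∑' kj : ℤ × ℤ,
    (w ^ 2 / ((b kj.1 - a kj.1) * (d kj.2 - c kj.2))) *
      φ (w * x - (kj.1 : ℝ), w * y - (kj.2 : ℝ)) *
      ∫ u in (((kj.1 : ℝ) + a kj.1) / w)..(((kj.1 : ℝ) + b kj.1) / w),
        ∫ v in (((kj.2 : ℝ) + c kj.2) / w)..(((kj.2 : ℝ) + d kj.2) / w), f (u, v)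

lemma bddII (g : ℝ → ℝ) (hg : AEStronglyMeasurable g volume) (C : ℝ)
    (hb : ∀ t, |g t| ≤ C) (p q : ℝ) : IntervalIntegrable g volume p q := by
  rw [intervalIntegrable_iff]
  apply MeasureTheory.Measure.integrableOn_of_bounded (M := C)
  · rw [Set.uIoc]; exact measure_Ioc_lt_top.ne
  · exact hg
  · exact Filter.Eventually.of_forall fun t => by simpa [Real.norm_eq_abs] using hb t

lemma avg_est (f : ℝ × ℝ → ℝ) (hfm : Measurable f) (Cf : ℝ) (hfb : ∀ p, |f p| ≤ Cf)
    (p q r s t B : ℝ) (hpq : p ≤ q) (hrs : r ≤ s)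
    (hB : ∀ u v, u ∈ Set.Icc p q → v ∈ Set.Icc r s → |f (u, v) - t| ≤ B) :
    |(∫ u in p..q, ∫ v in r..s, f (u, v)) - (q - p) * ((s - r) * t)| ≤ B * (s - r) * (q - p) := by
  have hmes : ∀ u, Measurable fun v => f (u, v) := fun u => hfm.comp measurable_prodMk_left
  have hii : ∀ u, IntervalIntegrable (fun v => f (u, v)) volume r s := fun u =>
    bddII _ (hmes u).aestronglyMeasurable Cf (fun v => hfb _) r s
  set g : ℝ → ℝ := fun u => ∫ v in r..s, f (u, v) with hg
  have hgsm : StronglyMeasurable g := by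
    have h1 : StronglyMeasurable fun u : ℝ => ∫ v, f (u, v) ∂(volume.restrict (Set.Ioc r s)) :=
      hfm.stronglyMeasurable.integral_prod_right'
    have : g = fun u : ℝ => ∫ v, f (u, v) ∂(volume.restrict (Set.Ioc r s)) :=
      funext fun u => intervalIntegral.integral_of_le hrs
    rw [this]; exact h1
  have hgb : ∀ u, |g u| ≤ Cf * |s - r| := fun u => by
    simpa [Real.norm_eq_abs] using
      intervalIntegral.norm_integral_le_of_norm_le_const
        (f := fun v => f (u, v)) (a := r) (b := s) (C := Cf)
        (fun v _ => by simpa [Real.norm_eq_abs] using hfb (u, v))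
  have hgi : IntervalIntegrable g volume p q :=
    bddII g hgsm.measurable.aestronglyMeasurable (Cf * |s - r|) hgb p q
  have h1 : ∀ u, (∫ v in r..s, (f (u, v) - t)) = g u - (s - r) * t := by
    intro u
    rw [intervalIntegral.integral_sub (hii u) intervalIntegrable_const,
      intervalIntegral.integral_const, smul_eq_mul]
  have h2 : (∫ u in p..q, ∫ v in r..s, (f (u, v) - t))
      = (∫ u in p..q, ∫ v in r..s, f (u, v)) - (q - p) * ((s - r) * t) := by
    simp only [h1]
    rw [intervalIntegral.integral_sub hgi intervalIntegrable_const,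
      intervalIntegral.integral_const, smul_eq_mul]
  have h3 : ‖∫ u in p..q, ∫ v in r..s, (f (u, v) - t)‖ ≤ (B * (s - r)) * |q - p| := by
    apply intervalIntegral.norm_integral_le_of_norm_le_const
    intro u hu
    rw [Set.uIoc_of_le hpq] at hu
    have hu' : u ∈ Set.Icc p q := Set.Ioc_subset_Icc_self hu
    have hin : ∀ v ∈ Set.uIoc r s, ‖f (u, v) - t‖ ≤ B := by
      intro v hv
      rw [Set.uIoc_of_le hrs] at hv
      simpa [Real.norm_eq_abs] using hB u v hu' (Set.Ioc_subset_Icc_self hv)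
    calc ‖∫ v in r..s, (f (u, v) - t)‖ ≤ B * |s - r| :=
          intervalIntegral.norm_integral_le_of_norm_le_const hin
      _ = B * (s - r) := by rw [abs_of_nonneg (by linarith)]
  rw [h2] at h3
  rw [abs_of_nonneg (by linarith : (0:ℝ) ≤ q - p)] at h3
  calc |(∫ u in p..q, ∫ v in r..s, f (u, v)) - (q - p) * ((s - r) * t)|
      ≤ B * (s - r) * (q - p) := by simpa [Real.norm_eq_abs] using h3

lemma avg_est2 (f : ℝ × ℝ → ℝ) (hfm : Measurable f) (Cf : ℝ) (hfb : ∀ p, |f p| ≤ Cf)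
    (w A1 B1 C1 D1 t B : ℝ) (hw : 0 < w) (h1 : A1 < B1) (h2 : C1 < D1)
    (hB : ∀ u v, u ∈ Set.Icc (A1/w) (B1/w) → v ∈ Set.Icc (C1/w) (D1/w) → |f (u, v) - t| ≤ B) :
    |w^2 / ((B1 - A1) * (D1 - C1)) * (∫ u in A1/w..B1/w, ∫ v in C1/w..D1/w, f (u, v)) - t|
      ≤ B := by
  have hw0 : w ≠ 0 := hw.ne'
  have hBA : B1 - A1 ≠ 0 := by linarith
  have hDC : D1 - C1 ≠ 0 := by linarith
  have hpq : A1/w ≤ B1/w := by apply div_le_div_of_nonneg_right h1.le hw.le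
  have hrs : C1/w ≤ D1/w := by apply div_le_div_of_nonneg_right h2.le hw.le
  have havg := avg_est f hfm Cf hfb (A1/w) (B1/w) (C1/w) (D1/w) t B hpq hrs hB
  set c0 := w^2 / ((B1 - A1) * (D1 - C1)) with hc0
  have hc0pos : 0 < c0 := by
    rw [hc0]; apply div_pos (by positivity); apply mul_pos <;> linarith
  have key : c0 * ((B1/w - A1/w) * ((D1/w - C1/w) * t)) = t := by
    rw [hc0]; field_simp
  have key2 : c0 * ((D1/w - C1/w) * (B1/w - A1/w)) = 1 := by
    rw [hc0]; field_simp
  calc |c0 * (∫ u in A1/w..B1/w, ∫ v in C1/w..D1/w, f (u, v)) - t|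
      = |c0 * ((∫ u in A1/w..B1/w, ∫ v in C1/w..D1/w, f (u, v))
          - (B1/w - A1/w) * ((D1/w - C1/w) * t))| := by rw [mul_sub, key]
    _ = c0 * |(∫ u in A1/w..B1/w, ∫ v in C1/w..D1/w, f (u, v))
          - (B1/w - A1/w) * ((D1/w - C1/w) * t)| := by
          rw [abs_mul, abs_of_nonneg hc0pos.le]
    _ ≤ c0 * (B * (D1/w - C1/w) * (B1/w - A1/w)) :=
          mul_le_mul_of_nonneg_left havg hc0pos.le
    _ = B * (c0 * ((D1/w - C1/w) * (B1/w - A1/w))) := by ring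
    _ = B := by rw [key2, mul_one]

lemma sumAbs (φ : ℝ × ℝ → ℝ) (Cφ M : ℝ) (hCφ : ∀ p, |φ p| ≤ Cφ)
    (hM : ∀ u v : ℝ,
      Summable (fun kj : ℤ × ℤ => |φ (u - (kj.1 : ℝ), v - (kj.2 : ℝ))| *
        (((kj.1 : ℝ) - u) ^ 2 + ((kj.2 : ℝ) - v) ^ 2)) ∧
      (∑' kj : ℤ × ℤ, |φ (u - (kj.1 : ℝ), v - (kj.2 : ℝ))| *
        (((kj.1 : ℝ) - u) ^ 2 + ((kj.2 : ℝ) - v) ^ 2)) ≤ M)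
    (u v : ℝ) :
    Summable (fun kj : ℤ × ℤ => |φ (u - (kj.1 : ℝ), v - (kj.2 : ℝ))|) ∧
    (∑' kj : ℤ × ℤ, |φ (u - (kj.1 : ℝ), v - (kj.2 : ℝ))|) ≤ 9 * Cφ + M := by
  have hCφ0 : 0 ≤ Cφ := le_trans (abs_nonneg _) (hCφ (0, 0))
  set T : Finset (ℤ × ℤ) := Finset.Icc ⌈u - 1⌉ ⌊u + 1⌋ ×ˢ Finset.Icc ⌈v - 1⌉ ⌊v + 1⌋ with hT
  set G : ℤ × ℤ → ℝ := fun kj => (if kj ∈ T then Cφ else 0) +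
    |φ (u - (kj.1 : ℝ), v - (kj.2 : ℝ))| * (((kj.1 : ℝ) - u) ^ 2 + ((kj.2 : ℝ) - v) ^ 2) with hG
  have hsum_if : Summable (fun kj : ℤ × ℤ => if kj ∈ T then Cφ else 0) :=
    summable_of_ne_finset_zero (s := T) (fun b hb => if_neg hb)
  have hGs : Summable G := hsum_if.add (hM u v).1
  have hle : ∀ kj : ℤ × ℤ, |φ (u - (kj.1 : ℝ), v - (kj.2 : ℝ))| ≤ G kj := by
    rintro ⟨k, j⟩
    by_cases h : 1 ≤ ((k : ℝ) - u) ^ 2 + ((j : ℝ) - v) ^ 2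
    · have h1 : |φ (u - (k : ℝ), v - (j : ℝ))| ≤
          |φ (u - (k : ℝ), v - (j : ℝ))| * (((k : ℝ) - u) ^ 2 + ((j : ℝ) - v) ^ 2) :=
        le_mul_of_one_le_right (abs_nonneg _) h
      have h2 : (0:ℝ) ≤ (if ((k, j) : ℤ × ℤ) ∈ T then Cφ else 0) := by positivity
      simp only [hG]; linarith
    · push_neg at h
      have hk1 : ((k : ℝ) - u) ^ 2 < 1 :=
        lt_of_le_of_lt (le_add_of_nonneg_right (sq_nonneg _)) h
      have hj1 : ((j : ℝ) - v) ^ 2 < 1 :=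
        lt_of_le_of_lt (le_add_of_nonneg_left (sq_nonneg _)) h
      have hmem : ((k, j) : ℤ × ℤ) ∈ T := by
        rw [hT, Finset.mem_product]
        constructor
        · rw [Finset.mem_Icc]
          constructor
          · rw [Int.ceil_le]; push_cast; nlinarith [sq_nonneg ((k : ℝ) - u + 1)]
          · rw [Int.le_floor]; push_cast; nlinarith [sq_nonneg ((k : ℝ) - u - 1)]
        · rw [Finset.mem_Icc]
          constructor
          · rw [Int.ceil_le]; push_cast; nlinarith [sq_nonneg ((j : ℝ) - v + 1)]
          · rw [Int.le_floor]; push_cast; nlinarith [sq_nonneg ((j : ℝ) - v - 1)]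
      have h2 : (0:ℝ) ≤ |φ (u - (k : ℝ), v - (j : ℝ))| *
          (((k : ℝ) - u) ^ 2 + ((j : ℝ) - v) ^ 2) := by positivity
      have h3 : |φ (u - (k : ℝ), v - (j : ℝ))| ≤ Cφ := hCφ _
      simp only [hG]; rw [if_pos hmem]; linarith
  have hS : Summable (fun kj : ℤ × ℤ => |φ (u - (kj.1 : ℝ), v - (kj.2 : ℝ))|) :=
    Summable.of_nonneg_of_le (fun _ => abs_nonneg _) hle hGs
  refine ⟨hS, ?_⟩
  have hcard : (T.card : ℝ) ≤ 9 := by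
    have c1 : (Finset.Icc ⌈u - 1⌉ ⌊u + 1⌋).card ≤ 3 := by
      rw [Int.card_Icc, Int.toNat_le]
      have f1 : ((⌊u + 1⌋ : ℤ) : ℝ) ≤ u + 1 := Int.floor_le _
      have f2 : u - 1 ≤ ((⌈u - 1⌉ : ℤ) : ℝ) := Int.le_ceil _
      exact_mod_cast show ((⌊u + 1⌋ + 1 - ⌈u - 1⌉ : ℤ) : ℝ) ≤ 3 by push_cast; linarith
    have c2 : (Finset.Icc ⌈v - 1⌉ ⌊v + 1⌋).card ≤ 3 := by
      rw [Int.card_Icc, Int.toNat_le]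
      have f1 : ((⌊v + 1⌋ : ℤ) : ℝ) ≤ v + 1 := Int.floor_le _
      have f2 : v - 1 ≤ ((⌈v - 1⌉ : ℤ) : ℝ) := Int.le_ceil _
      exact_mod_cast show ((⌊v + 1⌋ + 1 - ⌈v - 1⌉ : ℤ) : ℝ) ≤ 3 by push_cast; linarith
    have : T.card ≤ 9 := by
      rw [hT, Finset.card_product]
      calc (Finset.Icc ⌈u - 1⌉ ⌊u + 1⌋).card * (Finset.Icc ⌈v - 1⌉ ⌊v + 1⌋).card
          ≤ 3 * 3 := Nat.mul_le_mul c1 c2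
        _ = 9 := by norm_num
    exact_mod_cast this
  have hif_sum : (∑' kj : ℤ × ℤ, if kj ∈ T then Cφ else 0) ≤ 9 * Cφ := by
    rw [tsum_eq_sum (s := T) (fun b hb => if_neg hb)]
    calc (∑ kj ∈ T, if kj ∈ T then Cφ else 0) = ∑ kj ∈ T, Cφ :=
          Finset.sum_congr rfl (fun b hb => if_pos hb)
      _ = T.card • Cφ := Finset.sum_const _
      _ = (T.card : ℝ) * Cφ := nsmul_eq_mul _ _
      _ ≤ 9 * Cφ := mul_le_mul_of_nonneg_right hcard hCφ0
  calc (∑' kj : ℤ × ℤ, |φ (u - (kj.1 : ℝ), v - (kj.2 : ℝ))|) ≤ ∑' kj, G kj :=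
        Summable.tsum_le_tsum hle hS hGs
    _ = (∑' kj : ℤ × ℤ, if kj ∈ T then Cφ else 0) +
        ∑' kj : ℤ × ℤ, |φ (u - (kj.1 : ℝ), v - (kj.2 : ℝ))| *
          (((kj.1 : ℝ) - u) ^ 2 + ((kj.2 : ℝ) - v) ^ 2) := Summable.tsum_add hsum_if (hM u v).1
    _ ≤ 9 * Cφ + M := add_le_add hif_sum (hM u v).2

/-- pointwise convergence of the bivariate Kantorovich sampling
operators at a point of continuity of a bounded measurable function. -/
theorem kantorovich_pointwise_convergence
    (φ f : ℝ × ℝ → ℝ) (a b c d : ℤ → ℝ) (x y : ℝ)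
    (hφc : Continuous φ) (hφb : ∃ C, ∀ p, |φ p| ≤ C)
    -- (i) partition of unity
    (hpu : ∀ u v : ℝ, HasSum (fun kj : ℤ × ℤ => φ (u - (kj.1 : ℝ), v - (kj.2 : ℝ))) 1)
    -- (ii) finiteness of the second absolute moment M₂(φ)
    (hM2 : ∃ M, ∀ u v : ℝ,
      Summable (fun kj : ℤ × ℤ => |φ (u - (kj.1 : ℝ), v - (kj.2 : ℝ))| *
        (((kj.1 : ℝ) - u) ^ 2 + ((kj.2 : ℝ) - v) ^ 2)) ∧
      (∑' kj : ℤ × ℤ, |φ (u - (kj.1 : ℝ), v - (kj.2 : ℝ))| *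
        (((kj.1 : ℝ) - u) ^ 2 + ((kj.2 : ℝ) - v) ^ 2)) ≤ M)
    -- (ii) uniform vanishing of tails
    (htail : ∀ ε > (0 : ℝ), ∃ R > (0 : ℝ), ∀ u v : ℝ,
      (∑' kj : {p : ℤ × ℤ // ((p.1 : ℝ) - u) ^ 2 + ((p.2 : ℝ) - v) ^ 2 > R ^ 2},
        |φ (u - ((kj : ℤ × ℤ).1 : ℝ), v - ((kj : ℤ × ℤ).2 : ℝ))| *
          (((kj.val.1 : ℝ) - u) ^ 2 + ((kj.val.2 : ℝ) - v) ^ 2)) < ε)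
    -- bounded node sequences
    (hab : ∀ k, a k < b k) (hcd : ∀ j, c j < d j)
    (hbd : ∃ K, ∀ k : ℤ, |a k| ≤ K ∧ |b k| ≤ K ∧ |c k| ≤ K ∧ |d k| ≤ K)
    -- f ∈ L^∞(ℝ²), continuous at (x, y)
    (hfm : Measurable f) (hfb : ∃ C, ∀ p, |f p| ≤ C)
    (hcont : ContinuousAt f (x, y)) :
    Tendsto (fun w => kantorovich φ a b c d f w x y) atTop (nhds (f (x, y))) := by
  obtain ⟨Cφ, hCφ⟩ := hφb
  obtain ⟨M, hM⟩ := hM2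
  obtain ⟨Cf, hCf⟩ := hfb
  obtain ⟨K, hK⟩ := hbd
  have hCφ0 : 0 ≤ Cφ := le_trans (abs_nonneg _) (hCφ (0, 0))
  have hM0 : 0 ≤ M := le_trans (tsum_nonneg fun kj => by positivity) (hM 0 0).2
  have hCf0 : 0 ≤ Cf := le_trans (abs_nonneg _) (hCf (0, 0))
  have hK0 : 0 ≤ K := le_trans (abs_nonneg _) (hK 0).1
  set m₀ : ℝ := 9 * Cφ + M with hm₀def
  have hm₀0 : 0 ≤ m₀ := by positivity
  rw [Metric.tendsto_atTop]
  intro ε hε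
  set ε1 : ℝ := ε / (2 * (m₀ + 1)) with hε1def
  have hε1 : 0 < ε1 := by rw [hε1def]; positivity
  obtain ⟨δ, hδ0, hδ⟩ := Metric.continuousAt_iff.1 hcont ε1 hε1
  set ε2 : ℝ := ε / (2 * (2 * Cf + 1)) with hε2def
  have hε2 : 0 < ε2 := by rw [hε2def]; positivity
  obtain ⟨R0, hR0, htl⟩ := htail ε2 hε2
  set R : ℝ := max R0 1 with hRdef
  have hR1 : 1 ≤ R := le_max_right _ _
  have hRpos : 0 < R := lt_of_lt_of_le one_pos hR1
  refine ⟨max 1 ((R + K) / δ + 1), fun w hw => ?_⟩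
  have hw1 : 1 ≤ w := le_trans (le_max_left _ _) hw
  have hw0 : 0 < w := lt_of_lt_of_le one_pos hw1
  have hRK : (R + K) / w < δ := by
    rw [div_lt_iff₀ hw0]
    have h1 : (R + K) / δ + 1 ≤ w := le_trans (le_max_right _ _) hw
    have h2 : (R + K) / δ < w := by linarith
    rw [div_lt_iff₀ hδ0] at h2
    linarith only [h2]
  set Φ : ℤ × ℤ → ℝ := fun kj => φ (w * x - (kj.1 : ℝ), w * y - (kj.2 : ℝ)) with hΦdef
  set Iint : ℤ × ℤ → ℝ := fun kj =>
    ∫ u in (((kj.1 : ℝ) + a kj.1) / w)..(((kj.1 : ℝ) + b kj.1) / w),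
      ∫ v in (((kj.2 : ℝ) + c kj.2) / w)..(((kj.2 : ℝ) + d kj.2) / w), f (u, v) with hIdef
  set A : ℤ × ℤ → ℝ := fun kj =>
    (w ^ 2 / ((b kj.1 - a kj.1) * (d kj.2 - c kj.2))) * Iint kj with hAdef
  obtain ⟨hΦs, hΦle⟩ := sumAbs φ Cφ M hCφ hM (w * x) (w * y)
  have main_est : ∀ kj : ℤ × ℤ, ∀ B : ℝ,
      (∀ u' v' : ℝ, u' ∈ Set.Icc (((kj.1 : ℝ) + a kj.1) / w) (((kj.1 : ℝ) + b kj.1) / w) →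
        v' ∈ Set.Icc (((kj.2 : ℝ) + c kj.2) / w) (((kj.2 : ℝ) + d kj.2) / w) →
        |f (u', v') - f (x, y)| ≤ B) → |A kj - f (x, y)| ≤ B := by
    intro kj B hB
    have e : w ^ 2 / ((b kj.1 - a kj.1) * (d kj.2 - c kj.2)) =
        w ^ 2 / (((((kj.1 : ℝ)) + b kj.1) - (((kj.1 : ℝ)) + a kj.1)) *
          (((kj.2 : ℝ) + d kj.2) - ((kj.2 : ℝ) + c kj.2))) := by ring
    simp only [hAdef, hIdef]
    rw [e]
    exact avg_est2 f hfm Cf hCf w ((kj.1 : ℝ) + a kj.1) ((kj.1 : ℝ) + b kj.1)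
      ((kj.2 : ℝ) + c kj.2) ((kj.2 : ℝ) + d kj.2) (f (x, y)) B hw0
      (by linarith [hab kj.1]) (by linarith [hcd kj.2]) hB
  have hA2 : ∀ kj : ℤ × ℤ, |A kj - f (x, y)| ≤ 2 * Cf := by
    intro kj
    apply main_est kj (2 * Cf)
    intro u' v' _ _
    calc |f (u', v') - f (x, y)| ≤ |f (u', v')| + |f (x, y)| := abs_sub _ _
      _ ≤ Cf + Cf := add_le_add (hCf _) (hCf _)
      _ = 2 * Cf := by ring
  set F : Set (ℤ × ℤ) :=
    {p : ℤ × ℤ | ((p.1 : ℝ) - w * x) ^ 2 + ((p.2 : ℝ) - w * y) ^ 2 > R ^ 2} with hFdef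
  have hFc : ∀ kj : ℤ × ℤ, kj ∉ F → |A kj - f (x, y)| ≤ ε1 := by
    intro kj hkj
    have hD : ((kj.1 : ℝ) - w * x) ^ 2 + ((kj.2 : ℝ) - w * y) ^ 2 ≤ R ^ 2 := by
      simp only [hFdef, Set.mem_setOf_eq, not_lt] at hkj
      exact hkj
    have hk1 : |(kj.1 : ℝ) - w * x| ≤ R := abs_le.2 (abs_le_of_sq_le_sq'
      (by linarith only [hD, sq_nonneg ((kj.2 : ℝ) - w * y)]) hRpos.le)
    have hk2 : |(kj.2 : ℝ) - w * y| ≤ R := abs_le.2 (abs_le_of_sq_le_sq'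
      (by linarith only [hD, sq_nonneg ((kj.1 : ℝ) - w * x)]) hRpos.le)
    apply main_est kj ε1
    intro u' v' hu hv
    obtain ⟨hu1, hu2⟩ := hu
    obtain ⟨hv1, hv2⟩ := hv
    rw [div_le_iff₀ hw0] at hu1 hv1
    rw [le_div_iff₀ hw0] at hu2 hv2
    have hak := abs_le.1 (hK kj.1).1
    have hbk := abs_le.1 (hK kj.1).2.1
    have hcj := abs_le.1 (hK kj.2).2.2.1
    have hdj := abs_le.1 (hK kj.2).2.2.2
    have hkx := abs_le.1 hk1
    have hky := abs_le.1 hk2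
    have hux : |u' - x| ≤ (R + K) / w := by
      rw [abs_le]
      constructor
      · have h' : x - u' ≤ (R + K) / w := by
          rw [le_div_iff₀ hw0]
          linarith only [hu1, hak.1, hkx.1,
            show (x - u') * w = w * x - u' * w from by ring]
        linarith only [h']
      · rw [le_div_iff₀ hw0]
        linarith only [hu2, hbk.2, hkx.2,
          show (u' - x) * w = u' * w - w * x from by ring]
    have hvy : |v' - y| ≤ (R + K) / w := by
      rw [abs_le]
      constructor
      · have h' : y - v' ≤ (R + K) / w := by
          rw [le_div_iff₀ hw0]
          linarith only [hv1, hcj.1, hky.1,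
            show (y - v') * w = w * y - v' * w from by ring]
        linarith only [h']
      · rw [le_div_iff₀ hw0]
        linarith only [hv2, hdj.2, hky.2,
          show (v' - y) * w = v' * w - w * y from by ring]
    have hd2 : dist ((u', v') : ℝ × ℝ) ((x, y) : ℝ × ℝ) < δ := by
      rw [Prod.dist_eq]
      apply max_lt
      · rw [Real.dist_eq]; exact lt_of_le_of_lt hux hRK
      · rw [Real.dist_eq]; exact lt_of_le_of_lt hvy hRK
    have := hδ hd2
    rw [Real.dist_eq] at this
    exact this.le
  have hasum : HasSum Φ 1 := hpu (w * x) (w * y)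
  have hg3 : ∀ kj : ℤ × ℤ, |Φ kj * A kj| ≤ |Φ kj| * (3 * Cf) := by
    intro kj
    rw [abs_mul]
    apply mul_le_mul_of_nonneg_left _ (abs_nonneg _)
    calc |A kj| = |(A kj - f (x, y)) + f (x, y)| := by rw [sub_add_cancel]
      _ ≤ |A kj - f (x, y)| + |f (x, y)| := abs_add_le _ _
      _ ≤ 2 * Cf + Cf := add_le_add (hA2 kj) (hCf _)
      _ = 3 * Cf := by ring
  have hsum1 : Summable (fun kj => Φ kj * A kj) :=
    Summable.of_abs (Summable.of_nonneg_of_le (fun _ => abs_nonneg _) hg3 (hΦs.mul_right (3 * Cf)))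
  have hΦfs : Summable (fun kj => Φ kj * f (x, y)) := hasum.summable.mul_right _
  have hK_eq : kantorovich φ a b c d f w x y = ∑' kj, Φ kj * A kj := by
    simp only [kantorovich]
    exact tsum_congr fun kj => by simp only [hΦdef, hAdef, hIdef]; ring
  have h5 : (∑' kj, Φ kj * A kj) - f (x, y) = ∑' kj, Φ kj * (A kj - f (x, y)) := by
    have e : ∀ kj : ℤ × ℤ, Φ kj * (A kj - f (x, y)) = Φ kj * A kj - Φ kj * f (x, y) :=
      fun kj => by ring
    rw [tsum_congr e, Summable.tsum_sub hsum1 hΦfs, (hasum.mul_right (f (x, y))).tsum_eq, one_mul]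
  set g : ℤ × ℤ → ℝ := fun kj => |Φ kj * (A kj - f (x, y))| with hgdef
  have hgle : ∀ kj, g kj ≤ |Φ kj| * (2 * Cf) := fun kj => by
    simp only [hgdef]
    rw [abs_mul]
    exact mul_le_mul_of_nonneg_left (hA2 kj) (abs_nonneg _)
  have hsumg : Summable g := Summable.of_nonneg_of_le
    (fun kj => by simp only [hgdef]; positivity) hgle (hΦs.mul_right _)
  have hmom := (hM (w * x) (w * y)).1
  set q : ℤ × ℤ → ℝ := fun kj => |φ (w * x - (kj.1 : ℝ), w * y - (kj.2 : ℝ))| *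
    (((kj.1 : ℝ) - w * x) ^ 2 + ((kj.2 : ℝ) - w * y) ^ 2) with hqdef
  have hq0 : ∀ p, 0 ≤ q p := fun p => by simp only [hqdef]; positivity
  have hR2pos : (0:ℝ) < R ^ 2 := by positivity
  have hfar : (∑' kj : ↥F, g kj.val) ≤ 2 * Cf * ε2 := by
    have hpt : ∀ kj : ↥F, g kj.val ≤ (2 * Cf / R ^ 2) * q kj.val := by
      intro kj
      have hmem : ((kj.val.1 : ℝ) - w * x) ^ 2 + ((kj.val.2 : ℝ) - w * y) ^ 2 > R ^ 2 := kj.2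
      have h1 : g kj.val ≤ |Φ kj.val| * (2 * Cf) := hgle _
      have h2 : |Φ kj.val| * (2 * Cf) ≤ 2 * Cf / R ^ 2 * q kj.val := by
        simp only [hqdef, hΦdef]
        rw [div_mul_eq_mul_div, le_div_iff₀ hR2pos]
        have key := mul_le_mul_of_nonneg_left hmem.le
          (show (0:ℝ) ≤ 2 * Cf * |φ (w * x - (kj.val.1 : ℝ), w * y - (kj.val.2 : ℝ))| by positivity)
        linarith only [key]
      linarith
    have hs1 : Summable (fun kj : ↥F => g kj.val) := hsumg.subtype F
    have hs2 : Summable (fun kj : ↥F => (2 * Cf / R ^ 2) * q kj.val) :=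
      (hmom.subtype F).mul_left _
    have hq_tail : (∑' kj : ↥F, q kj.val) ≤ ε2 := by
      set F0 : Set (ℤ × ℤ) :=
        {p : ℤ × ℤ | ((p.1 : ℝ) - w * x) ^ 2 + ((p.2 : ℝ) - w * y) ^ 2 > R0 ^ 2} with hF0def
      have h0 : (∑' kj : ↥F0, q kj.val) < ε2 := htl (w * x) (w * y)
      have hsub : F ⊆ F0 := by
        intro p hp
        simp only [hFdef, Set.mem_setOf_eq] at hp
        simp only [hF0def, Set.mem_setOf_eq]
        have : R0 ^ 2 ≤ R ^ 2 := pow_le_pow_left₀ hR0.le (le_max_left _ _) 2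
        exact lt_of_le_of_lt this hp
      calc (∑' kj : ↥F, q kj.val) = ∑' kj, F.indicator q kj := tsum_subtype F q
        _ ≤ ∑' kj, F0.indicator q kj := Summable.tsum_le_tsum
            (fun kj => Set.indicator_le_indicator_of_subset hsub hq0 kj)
            (hmom.indicator F) (hmom.indicator F0)
        _ = ∑' kj : ↥F0, q kj.val := (tsum_subtype F0 q).symm
        _ ≤ ε2 := h0.le
    calc (∑' kj : ↥F, g kj.val) ≤ ∑' kj : ↥F, (2 * Cf / R ^ 2) * q kj.val :=
          Summable.tsum_le_tsum hpt hs1 hs2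
      _ = (2 * Cf / R ^ 2) * ∑' kj : ↥F, q kj.val := tsum_mul_left
      _ ≤ (2 * Cf / R ^ 2) * ε2 := mul_le_mul_of_nonneg_left hq_tail (by positivity)
      _ ≤ 2 * Cf * ε2 := by
          have h1 : 2 * Cf / R ^ 2 ≤ 2 * Cf := div_le_self (by positivity) (one_le_pow₀ hR1)
          exact mul_le_mul_of_nonneg_right h1 hε2.le
  have hnear : (∑' kj : ↥Fᶜ, g kj.val) ≤ ε1 * m₀ := by
    have hpt : ∀ kj : ↥Fᶜ, g kj.val ≤ |Φ kj.val| * ε1 := by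
      intro kj
      have hnot : kj.val ∉ F := kj.2
      simp only [hgdef]
      rw [abs_mul]
      exact mul_le_mul_of_nonneg_left (hFc kj.val hnot) (abs_nonneg _)
    have hs1 : Summable (fun kj : ↥Fᶜ => g kj.val) := hsumg.subtype _
    have hΦabs : Summable (fun kj : ℤ × ℤ => |Φ kj|) := hΦs
    have hs2 : Summable (fun kj : ↥Fᶜ => |Φ kj.val| * ε1) := (hΦabs.subtype _).mul_right _
    have hcompl : (∑' kj : ↥Fᶜ, |Φ kj.val|) ≤ m₀ := by
      calc (∑' kj : ↥Fᶜ, |Φ kj.val|)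
          = ∑' kj, Fᶜ.indicator (fun kj => |Φ kj|) kj := tsum_subtype Fᶜ (fun kj => |Φ kj|)
        _ ≤ ∑' kj, |Φ kj| := Summable.tsum_le_tsum
            (fun kj => Set.indicator_le_self' (fun p _ => abs_nonneg _) kj)
            (hΦabs.indicator _) hΦabs
        _ ≤ m₀ := hΦle
    calc (∑' kj : ↥Fᶜ, g kj.val) ≤ ∑' kj : ↥Fᶜ, |Φ kj.val| * ε1 := Summable.tsum_le_tsum hpt hs1 hs2
      _ = (∑' kj : ↥Fᶜ, |Φ kj.val|) * ε1 := tsum_mul_right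
      _ ≤ m₀ * ε1 := mul_le_mul_of_nonneg_right hcompl hε1.le
      _ = ε1 * m₀ := mul_comm _ _
  have h6 : |∑' kj, Φ kj * (A kj - f (x, y))| ≤ ∑' kj, g kj := by
    have hs : Summable (fun kj : ℤ × ℤ => ‖Φ kj * (A kj - f (x, y))‖) := by
      simpa only [Real.norm_eq_abs, hgdef] using hsumg
    simpa only [Real.norm_eq_abs, hgdef] using norm_tsum_le_tsum_norm hs
  have hsplit : (∑' kj, g kj) = (∑' kj : ↥F, g kj.val) + ∑' kj : ↥Fᶜ, g kj.val :=
    (Summable.tsum_add_tsum_compl (hsumg.subtype F) (hsumg.subtype Fᶜ)).symm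
  have t1 : ε1 * m₀ < ε / 2 := by
    have e : ε1 * (m₀ + 1) = ε / 2 := by
      rw [hε1def]; field_simp
    linarith only [e, hε1]
  have t2 : 2 * Cf * ε2 < ε / 2 := by
    have e : (2 * Cf + 1) * ε2 = ε / 2 := by
      rw [hε2def]; field_simp
    linarith only [e, hε2]
  rw [Real.dist_eq, hK_eq, h5]
  calc |∑' kj, Φ kj * (A kj - f (x, y))| ≤ ∑' kj, g kj := h6
    _ = (∑' kj : ↥F, g kj.val) + ∑' kj : ↥Fᶜ, g kj.val := hsplit
    _ ≤ 2 * Cf * ε2 + ε1 * m₀ := add_le_add hfar hnear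
    _ < ε := by clear_value m₀ ε1 ε2; linarith only [t1, t2]
end

section
/- Under the hypotheses of the pointwise convergence theorem, if f: ℝ² → ℝ is uniformly continuous and bounded, then the convergence of K_w^φ f to f is uniform: lim_{w→∞} ‖K_w^φ f − f‖_∞ = 0. -/
open Filter MeasureTheory

/-- |t| ≤ R from t² ≤ R². -/
lemma absLeSq {t R : ℝ} (hR : 0 ≤ R) (h : t ^ 2 ≤ R ^ 2) : |t| ≤ R := by
  rw [abs_le]
  constructor <;> nlinarith [sq_nonneg (t + R), sq_nonneg (t - R)]

/-- Monotonicity of subtype tsums of a nonnegative summable function. -/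
lemma tsumMonoSet {α : Type*} {f : α → ℝ} {s t : Set α} (hst : s ⊆ t)
    (hnn : ∀ x, 0 ≤ f x) (h : Summable f) : (∑' x : s, f x) ≤ ∑' x : t, f x := by
  rw [tsum_subtype, tsum_subtype]
  exact Summable.tsum_le_tsum (fun x => Set.indicator_le_indicator_of_subset hst hnn x)
    (h.indicator s) (h.indicator t)

/-- Iterated interval integral bound by a sup bound on the rectangle. -/
lemma iterAbsLe {g : ℝ → ℝ → ℝ} {α β γ δ B : ℝ}
    (h : ∀ u ∈ Set.uIcc α β, ∀ v ∈ Set.uIcc γ δ, |g u v| ≤ B) :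
    |∫ u in α..β, ∫ v in γ..δ, g u v| ≤ B * |β - α| * |δ - γ| := by
  have h1 : ∀ u ∈ Set.uIoc α β, ‖∫ v in γ..δ, g u v‖ ≤ B * |δ - γ| := fun u hu =>
    intervalIntegral.norm_integral_le_of_norm_le_const fun v hv => by
      simpa using h u (Set.uIoc_subset_uIcc hu) v (Set.uIoc_subset_uIcc hv)
  calc |∫ u in α..β, ∫ v in γ..δ, g u v| ≤ (B * |δ - γ|) * |β - α| :=
        intervalIntegral.norm_integral_le_of_norm_le_const h1
    _ = B * |β - α| * |δ - γ| := by ring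

/-- Subtracting a constant from an iterated interval integral. -/
lemma iterSubConst (f : ℝ × ℝ → ℝ) (hf : Continuous f) (α β γ δ c : ℝ) :
    (∫ u in α..β, ∫ v in γ..δ, (f (u, v) - c)) =
      (∫ u in α..β, ∫ v in γ..δ, f (u, v)) - c * (β - α) * (δ - γ) := by
  have hG : Continuous fun u => ∫ v in γ..δ, f (u, v) :=
    intervalIntegral.continuous_parametric_intervalIntegral_of_continuous'
      (f := fun u v => f (u, v)) (μ := MeasureTheory.volume) hf γ δ
  have h1 : ∀ u : ℝ, (∫ v in γ..δ, (f (u, v) - c)) = (∫ v in γ..δ, f (u, v)) - c * (δ - γ) := by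
    intro u
    have hi : Continuous fun v => f (u, v) := by fun_prop
    rw [intervalIntegral.integral_sub (hi.intervalIntegrable _ _) intervalIntegrable_const,
      intervalIntegral.integral_const, smul_eq_mul, mul_comm]
  rw [intervalIntegral.integral_congr (g := fun u => (∫ v in γ..δ, f (u, v)) - c * (δ - γ))
      (fun u _ => h1 u),
    intervalIntegral.integral_sub (hG.intervalIntegrable _ _) intervalIntegrable_const,
    intervalIntegral.integral_const, smul_eq_mul]
  ring

/-- The averaged integral is close to `z` if `f` is close to `z` on the rectangle. -/
lemma avgDiffLe (f : ℝ × ℝ → ℝ) (hf : Continuous f) {w p q r s B z : ℝ}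
    (hw : 0 < w) (hpq : p < q) (hrs : r < s) (hB : 0 ≤ B)
    (h : ∀ u ∈ Set.uIcc (p / w) (q / w), ∀ v ∈ Set.uIcc (r / w) (s / w), |f (u, v) - z| ≤ B) :
    |w ^ 2 / ((q - p) * (s - r)) *
        (∫ u in (p / w)..(q / w), ∫ v in (r / w)..(s / w), f (u, v)) - z| ≤ B := by
  have hw' : w ≠ 0 := ne_of_gt hw
  have hqp : (0:ℝ) < q - p := sub_pos.mpr hpq
  have hsr : (0:ℝ) < s - r := sub_pos.mpr hrs
  have hβα : q / w - p / w = (q - p) / w := (sub_div q p w).symm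
  have hδγ : s / w - r / w = (s - r) / w := (sub_div s r w).symm
  have hβα0 : 0 < q / w - p / w := by rw [hβα]; positivity
  have hδγ0 : 0 < s / w - r / w := by rw [hδγ]; positivity
  have hco : 0 < w ^ 2 / ((q - p) * (s - r)) := by positivity
  have hkey : w ^ 2 / ((q - p) * (s - r)) * ((q / w - p / w) * (s / w - r / w)) = 1 := by
    rw [hβα, hδγ]; field_simp
  have hiter := iterSubConst f hf (p / w) (q / w) (r / w) (s / w) z
  have hA : |∫ u in (p / w)..(q / w), ∫ v in (r / w)..(s / w), (f (u, v) - z)| ≤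
      B * |q / w - p / w| * |s / w - r / w| :=
    iterAbsLe (g := fun u v => f (u, v) - z) h
  have hstep : w ^ 2 / ((q - p) * (s - r)) *
      (∫ u in (p / w)..(q / w), ∫ v in (r / w)..(s / w), f (u, v)) - z =
      w ^ 2 / ((q - p) * (s - r)) *
      (∫ u in (p / w)..(q / w), ∫ v in (r / w)..(s / w), (f (u, v) - z)) := by
    rw [hiter]; linear_combination z * hkey
  rw [hstep, abs_mul, abs_of_pos hco]
  calc w ^ 2 / ((q - p) * (s - r)) *
      |∫ u in (p / w)..(q / w), ∫ v in (r / w)..(s / w), (f (u, v) - z)|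
      ≤ w ^ 2 / ((q - p) * (s - r)) * (B * |q / w - p / w| * |s / w - r / w|) :=
        mul_le_mul_of_nonneg_left hA (le_of_lt hco)
    _ = B := by rw [abs_of_pos hβα0, abs_of_pos hδγ0]; linear_combination B * hkey

/-- Uniform bound on the total sum of `|φ|` over the shifted lattice. -/
lemma sumAbsPhi (φ : ℝ × ℝ → ℝ) (Cφ M : ℝ) (hCφ : ∀ p, |φ p| ≤ Cφ) (u v : ℝ)
    (hq : Summable fun kj : ℤ × ℤ => |φ (u - (kj.1 : ℝ), v - (kj.2 : ℝ))| *
      (((kj.1 : ℝ) - u) ^ 2 + ((kj.2 : ℝ) - v) ^ 2))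
    (hqM : (∑' kj : ℤ × ℤ, |φ (u - (kj.1 : ℝ), v - (kj.2 : ℝ))| *
      (((kj.1 : ℝ) - u) ^ 2 + ((kj.2 : ℝ) - v) ^ 2)) ≤ M) :
    Summable (fun kj : ℤ × ℤ => |φ (u - (kj.1 : ℝ), v - (kj.2 : ℝ))|) ∧
      (∑' kj : ℤ × ℤ, |φ (u - (kj.1 : ℝ), v - (kj.2 : ℝ))|) ≤ 9 * Cφ + M := by
  have hCφ0 : 0 ≤ Cφ := le_trans (abs_nonneg _) (hCφ 0)
  set q : ℤ × ℤ → ℝ := fun kj => |φ (u - (kj.1 : ℝ), v - (kj.2 : ℝ))| *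
      (((kj.1 : ℝ) - u) ^ 2 + ((kj.2 : ℝ) - v) ^ 2) with hqdef
  set F : Finset (ℤ × ℤ) :=
    (Finset.Icc ⌈u - 1⌉ (⌈u - 1⌉ + 2)) ×ˢ (Finset.Icc ⌈v - 1⌉ (⌈v - 1⌉ + 2)) with hF
  set p : ℤ × ℤ → ℝ := fun kj => if kj ∈ F then Cφ else 0 with hp
  have hqn : ∀ kj, 0 ≤ q kj := fun kj => by positivity
  have hpn : ∀ kj, 0 ≤ p kj := fun kj => by by_cases h : kj ∈ F <;> simp [hp, h, hCφ0]
  have hle : ∀ kj : ℤ × ℤ, |φ (u - (kj.1 : ℝ), v - (kj.2 : ℝ))| ≤ p kj + q kj := by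
    intro kj
    by_cases hd : ((kj.1 : ℝ) - u) ^ 2 + ((kj.2 : ℝ) - v) ^ 2 ≤ 1
    · have h1 : ((kj.1 : ℝ) - u) ^ 2 ≤ 1 := by nlinarith [sq_nonneg ((kj.2 : ℝ) - v)]
      have h2 : ((kj.2 : ℝ) - v) ^ 2 ≤ 1 := by nlinarith [sq_nonneg ((kj.1 : ℝ) - u)]
      have hk1 : ⌈u - 1⌉ ≤ kj.1 := Int.ceil_le.mpr (by nlinarith)
      have hk2 : (kj.1 : ℝ) ≤ u + 1 := by nlinarith
      have hk3 : kj.1 ≤ ⌈u - 1⌉ + 2 := by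
        have h' : (kj.1 : ℝ) ≤ ((⌈u - 1⌉ + 2 : ℤ) : ℝ) := by
          push_cast; linarith [Int.le_ceil (u - 1)]
        exact_mod_cast h'
      have hj1 : ⌈v - 1⌉ ≤ kj.2 := Int.ceil_le.mpr (by nlinarith)
      have hj2 : (kj.2 : ℝ) ≤ v + 1 := by nlinarith
      have hj3 : kj.2 ≤ ⌈v - 1⌉ + 2 := by
        have h' : (kj.2 : ℝ) ≤ ((⌈v - 1⌉ + 2 : ℤ) : ℝ) := by
          push_cast; linarith [Int.le_ceil (v - 1)]
        exact_mod_cast h'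
      have hmem : kj ∈ F := by
        rw [hF, Finset.mem_product, Finset.mem_Icc, Finset.mem_Icc]
        exact ⟨⟨hk1, hk3⟩, ⟨hj1, hj3⟩⟩
      have : p kj = Cφ := by simp [hp, hmem]
      rw [this]
      exact le_add_of_le_of_nonneg (hCφ _) (hqn kj)
    · push_neg at hd
      have : |φ (u - (kj.1 : ℝ), v - (kj.2 : ℝ))| ≤ q kj := by
        rw [hqdef]
        exact le_mul_of_one_le_right (abs_nonneg _) (le_of_lt hd)
      exact le_add_of_nonneg_of_le (hpn kj) this
  have hps : Summable p := summable_of_ne_finset_zero (s := F) (fun b hb => if_neg hb)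
  have hsum : Summable (fun kj => p kj + q kj) := hps.add hq
  have hs : Summable (fun kj : ℤ × ℤ => |φ (u - (kj.1 : ℝ), v - (kj.2 : ℝ))|) :=
    Summable.of_nonneg_of_le (fun kj => abs_nonneg _) hle hsum
  refine ⟨hs, ?_⟩
  have hps_val : (∑' kj, p kj) ≤ 9 * Cφ := by
    rw [tsum_eq_sum (s := F) (fun b hb => if_neg hb)]
    have : ∀ kj ∈ F, p kj = Cφ := fun kj h => if_pos h
    rw [Finset.sum_congr rfl this, Finset.sum_const, nsmul_eq_mul]
    have hcard : F.card = 9 := by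
      have h3 : ∀ n : ℤ, (n + 2 + 1 - n).toNat = 3 := fun n => by omega
      rw [hF, Finset.card_product, Int.card_Icc, Int.card_Icc, h3, h3]
    rw [hcard]; norm_num
  calc (∑' kj : ℤ × ℤ, |φ (u - (kj.1 : ℝ), v - (kj.2 : ℝ))|) ≤ ∑' kj, (p kj + q kj) :=
        Summable.tsum_le_tsum hle hs hsum
    _ = (∑' kj, p kj) + ∑' kj, q kj := Summable.tsum_add hps hq
    _ ≤ 9 * Cφ + M := add_le_add hps_val hqM

/-- uniform convergence of the bivariate Kantorovich sampling
operators for a uniformly continuous and bounded function. -/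
theorem kantorovich_uniform_convergence
    (φ f : ℝ × ℝ → ℝ) (a b c d : ℤ → ℝ)
    (hφc : Continuous φ) (hφb : ∃ C, ∀ p, |φ p| ≤ C)
    -- (i) partition of unity
    (hpu : ∀ u v : ℝ, HasSum (fun kj : ℤ × ℤ => φ (u - (kj.1 : ℝ), v - (kj.2 : ℝ))) 1)
    -- (ii) finiteness of the second absolute moment M₂(φ)
    (hM2 : ∃ M, ∀ u v : ℝ,
      Summable (fun kj : ℤ × ℤ => |φ (u - (kj.1 : ℝ), v - (kj.2 : ℝ))| *
        (((kj.1 : ℝ) - u) ^ 2 + ((kj.2 : ℝ) - v) ^ 2)) ∧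
      (∑' kj : ℤ × ℤ, |φ (u - (kj.1 : ℝ), v - (kj.2 : ℝ))| *
        (((kj.1 : ℝ) - u) ^ 2 + ((kj.2 : ℝ) - v) ^ 2)) ≤ M)
    -- (ii) uniform vanishing of tails
    (htail : ∀ ε > (0 : ℝ), ∃ R > (0 : ℝ), ∀ u v : ℝ,
      (∑' kj : {p : ℤ × ℤ // ((p.1 : ℝ) - u) ^ 2 + ((p.2 : ℝ) - v) ^ 2 > R ^ 2},
        |φ (u - ((kj : ℤ × ℤ).1 : ℝ), v - ((kj : ℤ × ℤ).2 : ℝ))| *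
          (((kj.val.1 : ℝ) - u) ^ 2 + ((kj.val.2 : ℝ) - v) ^ 2)) < ε)
    -- bounded node sequences
    (hab : ∀ k, a k < b k) (hcd : ∀ j, c j < d j)
    (hbd : ∃ K, ∀ k : ℤ, |a k| ≤ K ∧ |b k| ≤ K ∧ |c k| ≤ K ∧ |d k| ≤ K)
    -- f uniformly continuous and bounded
    (hf : UniformContinuous f) (hfb : ∃ C, ∀ p, |f p| ≤ C) :
    ∀ ε > (0 : ℝ), ∃ W : ℝ, ∀ w ≥ W, ∀ x y : ℝ,
      |kantorovich φ a b c d f w x y - f (x, y)| ≤ ε := by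
  intro ε hε
  have hfc : Continuous f := hf.continuous
  obtain ⟨Cφ₀, hCφ₀⟩ := hφb
  obtain ⟨M₀, hM₀⟩ := hM2
  obtain ⟨Cf₀, hCf₀⟩ := hfb
  obtain ⟨K₀, hK₀⟩ := hbd
  set Cφ := max Cφ₀ 1 with hCφdef
  have hCφ : ∀ p, |φ p| ≤ Cφ := fun p => le_trans (hCφ₀ p) (le_max_left _ _)
  have hCφ1 : (1:ℝ) ≤ Cφ := le_max_right _ _
  set M := max M₀ 0 with hMdef
  have hM : ∀ u v : ℝ,
      Summable (fun kj : ℤ × ℤ => |φ (u - (kj.1 : ℝ), v - (kj.2 : ℝ))| *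
        (((kj.1 : ℝ) - u) ^ 2 + ((kj.2 : ℝ) - v) ^ 2)) ∧
      (∑' kj : ℤ × ℤ, |φ (u - (kj.1 : ℝ), v - (kj.2 : ℝ))| *
        (((kj.1 : ℝ) - u) ^ 2 + ((kj.2 : ℝ) - v) ^ 2)) ≤ M :=
    fun u v => ⟨(hM₀ u v).1, le_trans (hM₀ u v).2 (le_max_left _ _)⟩
  have hM0 : 0 ≤ M := le_max_right _ _
  set Cf := max Cf₀ 1 with hCfdef
  have hCf : ∀ p, |f p| ≤ Cf := fun p => le_trans (hCf₀ p) (le_max_left _ _)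
  have hCf1 : (1:ℝ) ≤ Cf := le_max_right _ _
  have hCfpos : (0:ℝ) < Cf := lt_of_lt_of_le one_pos hCf1
  set K := max K₀ 0 with hKdef
  have hK : ∀ k : ℤ, |a k| ≤ K ∧ |b k| ≤ K ∧ |c k| ≤ K ∧ |d k| ≤ K := fun k =>
    ⟨le_trans (hK₀ k).1 (le_max_left _ _), le_trans (hK₀ k).2.1 (le_max_left _ _),
     le_trans (hK₀ k).2.2.1 (le_max_left _ _), le_trans (hK₀ k).2.2.2 (le_max_left _ _)⟩
  have hK0 : (0:ℝ) ≤ K := le_max_right _ _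
  set m₀ := 9 * Cφ + M with hm₀def
  have hm₀ : (0:ℝ) < m₀ := by rw [hm₀def]; linarith
  set ε₁ := ε / (2 * m₀) with hε₁def
  have hε₁ : 0 < ε₁ := by rw [hε₁def]; positivity
  have hε₁m : ε₁ * m₀ = ε / 2 := by rw [hε₁def]; field_simp
  set ε₂ := ε / (4 * Cf) with hε₂def
  have hε₂ : 0 < ε₂ := by rw [hε₂def]; positivity
  have hε₂m : (2 * Cf) * ε₂ = ε / 2 := by rw [hε₂def]; field_simp; ring
  obtain ⟨R₀, hR₀pos, hR₀⟩ := htail ε₂ hε₂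
  set R := max R₀ 1 with hRdef
  have hR1 : (1:ℝ) ≤ R := le_max_right _ _
  have hRpos : (0:ℝ) < R := lt_of_lt_of_le one_pos hR1
  have hR₀R : R₀ ≤ R := le_max_left _ _
  obtain ⟨δ, hδpos, hδ⟩ := Metric.uniformContinuous_iff.mp hf ε₁ hε₁
  refine ⟨(R + K) / δ + 1, fun w hw x y => ?_⟩
  have hRK : (0:ℝ) ≤ R + K := by linarith
  have hw1 : (1:ℝ) ≤ w := by
    have h0 : (0:ℝ) ≤ (R + K) / δ := by positivity
    linarith
  have hwpos : (0:ℝ) < w := lt_of_lt_of_le one_pos hw1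
  have hwRK : (R + K) / w < δ := by
    have h' : (R + K) / δ < w := by linarith
    have h2 : R + K < w * δ := (div_lt_iff₀ hδpos).mp h'
    rw [div_lt_iff₀ hwpos, mul_comm δ w]
    exact h2
  -- abbreviations
  set P : ℤ × ℤ → ℝ := fun kj => φ (w * x - (kj.1 : ℝ), w * y - (kj.2 : ℝ)) with hPdef
  set A : ℤ × ℤ → ℝ := fun kj =>
    (w ^ 2 / ((b kj.1 - a kj.1) * (d kj.2 - c kj.2))) *
      ∫ u in (((kj.1 : ℝ) + a kj.1) / w)..(((kj.1 : ℝ) + b kj.1) / w),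
        ∫ v in (((kj.2 : ℝ) + c kj.2) / w)..(((kj.2 : ℝ) + d kj.2) / w), f (u, v) with hAdef
  set q : ℤ × ℤ → ℝ := fun kj =>
    |P kj| * (((kj.1 : ℝ) - w * x) ^ 2 + ((kj.2 : ℝ) - w * y) ^ 2) with hqdef
  set D : ℤ × ℤ → ℝ := fun kj => |P kj| * |A kj - f (x, y)| with hDdef
  have hPsum : HasSum P 1 := by rw [hPdef]; exact hpu (w * x) (w * y)
  have hqsum : Summable q := by
    simp only [hqdef, hPdef]; exact (hM (w * x) (w * y)).1
  have hqnn : ∀ kj, 0 ≤ q kj := fun kj => by rw [hqdef]; positivity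
  obtain ⟨habsP₀, habsPle₀⟩ :=
    sumAbsPhi φ Cφ M hCφ (w * x) (w * y) (hM (w * x) (w * y)).1 (hM (w * x) (w * y)).2
  have habsP : Summable fun kj => |P kj| := by simp only [hPdef]; exact habsP₀
  have habsPle : (∑' kj, |P kj|) ≤ m₀ := by
    rw [hm₀def]; simp only [hPdef]; exact habsPle₀
  -- the average bound
  have havg : ∀ (kj : ℤ × ℤ) (Bz z : ℝ), 0 ≤ Bz →
      (∀ u ∈ Set.uIcc ((((kj.1 : ℝ)) + a kj.1) / w) ((((kj.1 : ℝ)) + b kj.1) / w),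
        ∀ v ∈ Set.uIcc ((((kj.2 : ℝ)) + c kj.2) / w) ((((kj.2 : ℝ)) + d kj.2) / w),
          |f (u, v) - z| ≤ Bz) → |A kj - z| ≤ Bz := by
    intro kj Bz z hBz h
    have h1 : ((kj.1 : ℝ) + a kj.1) < ((kj.1 : ℝ) + b kj.1) := by linarith [hab kj.1]
    have h2 : ((kj.2 : ℝ) + c kj.2) < ((kj.2 : ℝ) + d kj.2) := by linarith [hcd kj.2]
    have hres := avgDiffLe f hfc hwpos h1 h2 hBz h
    simp only [show ((kj.1 : ℝ) + b kj.1) - ((kj.1 : ℝ) + a kj.1) = b kj.1 - a kj.1 by ring,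
      show ((kj.2 : ℝ) + d kj.2) - ((kj.2 : ℝ) + c kj.2) = d kj.2 - c kj.2 by ring] at hres
    rw [hAdef]
    exact hres
  have hA2 : ∀ kj : ℤ × ℤ, |A kj - f (x, y)| ≤ 2 * Cf := by
    intro kj
    refine havg kj (2 * Cf) _ (by linarith) ?_
    intro u _ v _
    obtain ⟨ha1, ha2⟩ := abs_le.mp (hCf (u, v))
    obtain ⟨hb1, hb2⟩ := abs_le.mp (hCf (x, y))
    rw [abs_le]; constructor <;> linarith
  have hAnear : ∀ kj : ℤ × ℤ,
      ((kj.1 : ℝ) - w * x) ^ 2 + ((kj.2 : ℝ) - w * y) ^ 2 ≤ R ^ 2 →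
      |A kj - f (x, y)| ≤ ε₁ := by
    intro kj hnear
    refine havg kj ε₁ _ (le_of_lt hε₁) ?_
    intro u hu v hv
    have hk : |(kj.1 : ℝ) - w * x| ≤ R :=
      absLeSq (le_of_lt hRpos) (by linarith [sq_nonneg ((kj.2 : ℝ) - w * y)])
    have hj : |(kj.2 : ℝ) - w * y| ≤ R :=
      absLeSq (le_of_lt hRpos) (by linarith [sq_nonneg ((kj.1 : ℝ) - w * x)])
    obtain ⟨hk1, hk2⟩ := abs_le.mp hk
    obtain ⟨hj1, hj2⟩ := abs_le.mp hj
    obtain ⟨haK, hbK, hcK, hdK⟩ := hK kj.1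
    obtain ⟨haK', hbK', hcK', hdK'⟩ := hK kj.2
    obtain ⟨ha1, ha2⟩ := abs_le.mp haK
    obtain ⟨hb1, hb2⟩ := abs_le.mp hbK
    obtain ⟨hc1, hc2⟩ := abs_le.mp hcK'
    obtain ⟨hd1, hd2⟩ := abs_le.mp hdK'
    -- bounds on u
    have hule : (((kj.1 : ℝ)) + a kj.1) / w ≤ (((kj.1 : ℝ)) + b kj.1) / w :=
      (div_le_div_iff_of_pos_right hwpos).mpr (by linarith [hab kj.1])
    rw [Set.uIcc_of_le hule] at hu
    obtain ⟨hu1, hu2⟩ := hu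
    have hu1' : (kj.1 : ℝ) + a kj.1 ≤ u * w := (div_le_iff₀ hwpos).mp hu1
    have hu2' : u * w ≤ (kj.1 : ℝ) + b kj.1 := (le_div_iff₀ hwpos).mp hu2
    have hvle : (((kj.2 : ℝ)) + c kj.2) / w ≤ (((kj.2 : ℝ)) + d kj.2) / w :=
      (div_le_div_iff_of_pos_right hwpos).mpr (by linarith [hcd kj.2])
    rw [Set.uIcc_of_le hvle] at hv
    obtain ⟨hv1, hv2⟩ := hv
    have hv1' : (kj.2 : ℝ) + c kj.2 ≤ v * w := (div_le_iff₀ hwpos).mp hv1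
    have hv2' : v * w ≤ (kj.2 : ℝ) + d kj.2 := (le_div_iff₀ hwpos).mp hv2
    have hcomx : x * w = w * x := mul_comm x w
    have hcomy : y * w = w * y := mul_comm y w
    have h5 : |u * w - x * w| ≤ R + K := by rw [abs_le]; constructor <;> linarith
    have h5' : |v * w - y * w| ≤ R + K := by rw [abs_le]; constructor <;> linarith
    have habsu : |u - x| * w = |u * w - x * w| := by
      rw [← abs_of_pos hwpos, ← abs_mul, sub_mul, abs_of_pos hwpos]
    have habsv : |v - y| * w = |v * w - y * w| := by
      rw [← abs_of_pos hwpos, ← abs_mul, sub_mul, abs_of_pos hwpos]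
    have hux : |u - x| < δ := by
      have h6 : |u - x| ≤ (R + K) / w := by rw [le_div_iff₀ hwpos, habsu]; exact h5
      exact lt_of_le_of_lt h6 hwRK
    have hvy : |v - y| < δ := by
      have h6 : |v - y| ≤ (R + K) / w := by rw [le_div_iff₀ hwpos, habsv]; exact h5'
      exact lt_of_le_of_lt h6 hwRK
    have hdist : dist (u, v) (x, y) < δ := by
      rw [Prod.dist_eq]
      simp only [Real.dist_eq]
      exact max_lt hux hvy
    have := hδ hdist
    rw [Real.dist_eq] at this
    exact le_of_lt this
  -- summability facts
  have hDnn : ∀ kj, 0 ≤ D kj := fun kj => by rw [hDdef]; positivity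
  have hDle2 : ∀ kj, D kj ≤ 2 * Cf * |P kj| := by
    intro kj
    rw [hDdef]
    calc |P kj| * |A kj - f (x, y)| ≤ |P kj| * (2 * Cf) :=
          mul_le_mul_of_nonneg_left (hA2 kj) (abs_nonneg _)
      _ = 2 * Cf * |P kj| := mul_comm _ _
  have hDsum : Summable D :=
    Summable.of_nonneg_of_le hDnn hDle2 (habsP.mul_left (2 * Cf))
  have hTsum : Summable fun kj => P kj * A kj := by
    refine Summable.of_abs (Summable.of_nonneg_of_le (fun kj => abs_nonneg _)
      (fun kj => ?_) (habsP.mul_left (3 * Cf)))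
    have hA3 : |A kj| ≤ 3 * Cf := by
      obtain ⟨h1, h2⟩ := abs_le.mp (hA2 kj)
      obtain ⟨h3, h4⟩ := abs_le.mp (hCf (x, y))
      rw [abs_le]; constructor <;> linarith
    calc |P kj * A kj| = |P kj| * |A kj| := abs_mul _ _
      _ ≤ |P kj| * (3 * Cf) := mul_le_mul_of_nonneg_left hA3 (abs_nonneg _)
      _ = 3 * Cf * |P kj| := mul_comm _ _
  have hPf : Summable fun kj => P kj * f (x, y) := hPsum.summable.mul_right _
  have hfs : (∑' kj, P kj * f (x, y)) = f (x, y) := by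
    simpa using (hPsum.mul_right (f (x, y))).tsum_eq
  have hT : kantorovich φ a b c d f w x y = ∑' kj : ℤ × ℤ, P kj * A kj := by
    unfold kantorovich
    refine tsum_congr fun kj => ?_
    simp only [hPdef, hAdef]
    ring
  have hE : (fun kj : ℤ × ℤ => ‖P kj * A kj - P kj * f (x, y)‖) = D := by
    funext kj
    simp only [Real.norm_eq_abs, ← mul_sub, abs_mul, hDdef]
  -- far set
  set S : Set (ℤ × ℤ) :=
    {p : ℤ × ℤ | ((p.1 : ℝ) - w * x) ^ 2 + ((p.2 : ℝ) - w * y) ^ 2 > R ^ 2} with hSdef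
  -- far bound
  have hfar : (∑' kj : S, D kj) ≤ ε / 2 := by
    have hc0 : (0:ℝ) ≤ 2 * Cf / R ^ 2 := by positivity
    have hpt : ∀ kj : S, D (kj : ℤ × ℤ) ≤ (2 * Cf / R ^ 2) * q (kj : ℤ × ℤ) := by
      rintro ⟨kj, hkj⟩
      simp only [hSdef, Set.mem_setOf_eq] at hkj
      have h1 : |P kj| * R ^ 2 ≤ q kj := by
        rw [hqdef]
        exact mul_le_mul_of_nonneg_left (le_of_lt hkj) (abs_nonneg _)
      have h2 : |P kj| ≤ q kj / R ^ 2 := (le_div_iff₀ (by positivity)).mpr h1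
      calc D kj = |P kj| * |A kj - f (x, y)| := by rw [hDdef]
        _ ≤ |P kj| * (2 * Cf) := mul_le_mul_of_nonneg_left (hA2 kj) (abs_nonneg _)
        _ ≤ (q kj / R ^ 2) * (2 * Cf) :=
            mul_le_mul_of_nonneg_right h2 (by positivity)
        _ = (2 * Cf / R ^ 2) * q kj := by ring
    have hS0 : (∑' kj : S, q (kj : ℤ × ℤ)) ≤ ε₂ := by
      have hsub : S ⊆ {p : ℤ × ℤ |
          ((p.1 : ℝ) - w * x) ^ 2 + ((p.2 : ℝ) - w * y) ^ 2 > R₀ ^ 2} := by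
        intro p hp
        simp only [hSdef, Set.mem_setOf_eq] at hp ⊢
        have : R₀ ^ 2 ≤ R ^ 2 := pow_le_pow_left₀ (le_of_lt hR₀pos) hR₀R 2
        linarith
      have hmono := tsumMonoSet hsub hqnn hqsum
      have htail' := hR₀ (w * x) (w * y)
      refine le_trans hmono (le_of_lt ?_)
      exact htail'
    calc (∑' kj : S, D (kj : ℤ × ℤ))
        ≤ ∑' kj : S, (2 * Cf / R ^ 2) * q (kj : ℤ × ℤ) :=
          Summable.tsum_le_tsum hpt (hDsum.subtype S) ((hqsum.mul_left _).subtype S)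
      _ = (2 * Cf / R ^ 2) * ∑' kj : S, q (kj : ℤ × ℤ) := tsum_mul_left
      _ ≤ (2 * Cf / R ^ 2) * ε₂ := mul_le_mul_of_nonneg_left hS0 hc0
      _ ≤ (2 * Cf) * ε₂ := by
          have hR2 : (1:ℝ) ≤ R ^ 2 := by
            have := mul_le_mul hR1 hR1 zero_le_one (by linarith : (0:ℝ) ≤ R)
            rw [pow_two]; linarith
          have h1 : 2 * Cf / R ^ 2 ≤ 2 * Cf := by
            rw [div_le_iff₀ (by positivity)]
            have := mul_le_mul_of_nonneg_left hR2 (by positivity : (0:ℝ) ≤ 2 * Cf)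
            linarith
          exact mul_le_mul_of_nonneg_right h1 (le_of_lt hε₂)
      _ = ε / 2 := hε₂m
  -- near bound
  have hnear : (∑' kj : ↑Sᶜ, D kj) ≤ ε / 2 := by
    have hpt : ∀ kj : ↑Sᶜ, D (kj : ℤ × ℤ) ≤ ε₁ * |P (kj : ℤ × ℤ)| := by
      rintro ⟨kj, hkj⟩
      simp only [hSdef, Set.mem_compl_iff, Set.mem_setOf_eq, not_lt] at hkj
      calc D kj = |P kj| * |A kj - f (x, y)| := by rw [hDdef]
        _ ≤ |P kj| * ε₁ := mul_le_mul_of_nonneg_left (hAnear kj hkj) (abs_nonneg _)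
        _ = ε₁ * |P kj| := mul_comm _ _
    calc (∑' kj : ↑Sᶜ, D (kj : ℤ × ℤ))
        ≤ ∑' kj : ↑Sᶜ, ε₁ * |P (kj : ℤ × ℤ)| :=
          Summable.tsum_le_tsum hpt (hDsum.subtype _) ((habsP.mul_left ε₁).subtype _)
      _ = ε₁ * ∑' kj : ↑Sᶜ, |P (kj : ℤ × ℤ)| := tsum_mul_left
      _ ≤ ε₁ * m₀ := by
          refine mul_le_mul_of_nonneg_left ?_ (le_of_lt hε₁)
          exact le_trans
            (Summable.tsum_subtype_le (fun kj => |P kj|) _ (fun kj => abs_nonneg _) habsP) habsPle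
      _ = ε / 2 := hε₁m
  -- main estimate
  have hkey : kantorovich φ a b c d f w x y - f (x, y) =
      ∑' kj : ℤ × ℤ, (P kj * A kj - P kj * f (x, y)) := by
    rw [hT, Summable.tsum_sub hTsum hPf, hfs]
  calc |kantorovich φ a b c d f w x y - f (x, y)|
      = |∑' kj : ℤ × ℤ, (P kj * A kj - P kj * f (x, y))| := by rw [hkey]
    _ ≤ ∑' kj : ℤ × ℤ, ‖P kj * A kj - P kj * f (x, y)‖ := by
        rw [← Real.norm_eq_abs]
        exact norm_tsum_le_tsum_norm (by rw [hE]; exact hDsum)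
    _ = ∑' kj : ℤ × ℤ, D kj := by rw [hE]
    _ = (∑' kj : S, D kj) + ∑' kj : ↑Sᶜ, D kj :=
        (Summable.tsum_add_tsum_compl (hDsum.subtype S) (hDsum.subtype Sᶜ)).symm
    _ ≤ ε / 2 + ε / 2 := add_le_add hfar hnear
    _ = ε := by ring
end

section
/- Under the Voronovskaja hypotheses, the key first-moment computation holds exactly: for any w > 0 and (x,y) ∈ ℝ², Σ_{k,j∈ℤ} (w²/((b_k−a_k)(d_j−c_j))) φ(wx−k, wy−j) ∫_{(k+a_k)/w}^{(k+b_k)/w} ∫_{(j+c_j)/w}^{(j+d_j)/w} (u−x) dv du = α/(2w), where α = a_k + b_k (constant in k). -/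
open MeasureTheory

/-- exact first-moment computation for the bivariate Kantorovich
sampling operators: the series applied to `u - x` equals `α/(2w)`. -/
theorem kantorovich_first_moment
    (φ : ℝ × ℝ → ℝ) (a b c d : ℤ → ℝ) (α : ℝ) (w x y : ℝ) (hw : 0 < w)
    -- partition of unity
    (hpu : ∀ u v : ℝ, HasSum (fun kj : ℤ × ℤ => φ (u - (kj.1 : ℝ), v - (kj.2 : ℝ))) 1)
    -- vanishing first moment m¹₍₁,₀₎(φ) = 0
    (hm10 : ∀ u v : ℝ,
      HasSum (fun kj : ℤ × ℤ => φ (u - (kj.1 : ℝ), v - (kj.2 : ℝ)) * ((kj.1 : ℝ) - u)) 0)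
    -- M₁(φ) < ∞ : absolute convergence of the relevant series
    (hM1 : ∃ M, ∀ u v : ℝ,
      Summable (fun kj : ℤ × ℤ => |φ (u - (kj.1 : ℝ), v - (kj.2 : ℝ))| *
        (1 + |(kj.1 : ℝ) - u| + |(kj.2 : ℝ) - v|)) ∧
      (∑' kj : ℤ × ℤ, |φ (u - (kj.1 : ℝ), v - (kj.2 : ℝ))| *
        (1 + |(kj.1 : ℝ) - u| + |(kj.2 : ℝ) - v|)) ≤ M)
    -- node sequences
    (hab : ∀ k, a k < b k) (hcd : ∀ j, c j < d j)
    (hbd : ∃ K, ∀ k : ℤ, |a k| ≤ K ∧ |b k| ≤ K ∧ |c k| ≤ K ∧ |d k| ≤ K)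
    (hα : ∀ k, a k + b k = α) :
    (∑' kj : ℤ × ℤ,
      (w ^ 2 / ((b kj.1 - a kj.1) * (d kj.2 - c kj.2))) *
        φ (w * x - (kj.1 : ℝ), w * y - (kj.2 : ℝ)) *
        ∫ u in (((kj.1 : ℝ) + a kj.1) / w)..(((kj.1 : ℝ) + b kj.1) / w),
          ∫ _v in (((kj.2 : ℝ) + c kj.2) / w)..(((kj.2 : ℝ) + d kj.2) / w), (u - x))
      = α / (2 * w) := by
  have hw' : w ≠ 0 := ne_of_gt hw
  have h1 := (hpu (w*x) (w*y)).mul_right (α/(2*w))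
  have h2 := (hm10 (w*x) (w*y)).mul_right (1/w)
  have h3 := h1.add h2
  rw [one_mul, zero_mul, add_zero] at h3
  have key : (fun kj : ℤ × ℤ => φ (w*x - (kj.1:ℝ), w*y - (kj.2:ℝ)) * (α/(2*w)) +
      φ (w*x - (kj.1:ℝ), w*y - (kj.2:ℝ)) * ((kj.1 : ℝ) - w*x) * (1/w)) =
      fun kj : ℤ × ℤ => (w ^ 2 / ((b kj.1 - a kj.1) * (d kj.2 - c kj.2))) *
        φ (w * x - (kj.1 : ℝ), w * y - (kj.2 : ℝ)) *
        ∫ u in (((kj.1 : ℝ) + a kj.1) / w)..(((kj.1 : ℝ) + b kj.1) / w),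
          ∫ _v in (((kj.2 : ℝ) + c kj.2) / w)..(((kj.2 : ℝ) + d kj.2) / w), (u - x) := by
    funext kj
    obtain ⟨k, j⟩ := kj
    have hba : b k - a k ≠ 0 := sub_ne_zero.mpr (hab k).ne'
    have hdc : d j - c j ≠ 0 := sub_ne_zero.mpr (hcd j).ne'
    have hin : ∀ u : ℝ, (∫ _v in (((j:ℝ)+c j)/w)..(((j:ℝ)+d j)/w), (u - x)) =
        (((j:ℝ)+d j)/w - ((j:ℝ)+c j)/w) * (u - x) := by
      intro u; rw [intervalIntegral.integral_const, smul_eq_mul]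
    simp only [hin]
    rw [intervalIntegral.integral_const_mul]
    have hout : (∫ u in (((k:ℝ)+a k)/w)..(((k:ℝ)+b k)/w), (u - x)) =
        (((((k:ℝ)+b k)/w)^2 - (((k:ℝ)+a k)/w)^2)/2 - x*((((k:ℝ)+b k)/w) - (((k:ℝ)+a k)/w))) := by
      rw [intervalIntegral.integral_sub intervalIntegral.intervalIntegrable_id
        intervalIntegrable_const, integral_id,
        intervalIntegral.integral_const, smul_eq_mul]
      ring
    rw [hout, ← hα k]
    field_simp
    ring
  rw [← key]
  exact h3.tsum_eq
end

section
/- If |f(x,y)| ≤ a + b(x²+y²) for all (x,y) ∈ ℝ² (a, b > 0), and the kernel φ has finite absolute moments M₀(φ), M¹_{(1,0)}(φ), M¹_{(0,1)}(φ), M²_{(2,0)}(φ), M²_{(0,2)}(φ), and the sequences satisfy sup{|a_k|,|b_k|,|c_j|,|d_j|} ≤ K with a_k+b_k = α, c_j+d_j = β, b_k−a_k ≥ l₀ > 0, d_j−c_j ≥ s₀ > 0, then the series defining K_w^φ f(x,y) converges absolutely for every (x,y) ∈ ℝ² and every w > 0, with |K_w^φ f(x,y)| ≤ M₀(φ)(a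 + b(x²+y²) + (b/w)(|α||x|+|β||y|) + 2bK²/w²) + (2b/w)(|x|M¹_{(1,0)}(φ) + |y|M¹_{(0,1)}(φ)) + (b/w²)(|α|M¹_{(1,0)}(φ) + |β|M¹_{(0,1)}(φ)) + (b/w²)(M²_{(2,0)}(φ) + M²_{(0,2)}(φ)). -/
open MeasureTheory

open intervalIntegral

set_option maxHeartbeats 1000000


lemma sq_le_of_mem {r s v : ℝ} (h1 : r ≤ v) (h2 : v ≤ s) : v ^ 2 ≤ r ^ 2 + s ^ 2 := by
  nlinarith [mul_nonneg (sub_nonneg.2 h1) (sub_nonneg.2 h2), sq_nonneg (r + s), sq_nonneg (r - s)]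

lemma integ_bound (f : ℝ × ℝ → ℝ) (hfm : Measurable f) (A B : ℝ) (hA : 0 ≤ A) (hB : 0 ≤ B)
    (hfg : ∀ u v : ℝ, |f (u, v)| ≤ A + B * (u ^ 2 + v ^ 2))
    (p q r s : ℝ) (hpq : p ≤ q) (hrs : r ≤ s) :
    |∫ u in p..q, ∫ v in r..s, f (u, v)| ≤
      A * ((q - p) * (s - r)) +
        B * ((s - r) * (q ^ 3 - p ^ 3) / 3 + (q - p) * (s ^ 3 - r ^ 3) / 3) := by
  -- inner integrability
  have hCv : ∀ u : ℝ, IntervalIntegrable (fun v => f (u, v)) volume r s := by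
    intro u
    have hm : Measurable (fun v => f (u, v)) := hfm.comp measurable_prodMk_left
    rw [intervalIntegrable_iff]
    refine Integrable.mono' (g := fun _ => A + B * (u ^ 2 + (r ^ 2 + s ^ 2)))
      (integrableOn_const ?_) hm.aestronglyMeasurable ?_
    · simp [Set.uIoc, Real.volume_Ioc]
    · refine (ae_restrict_iff' measurableSet_uIoc).2 (Filter.Eventually.of_forall ?_)
      intro v hv
      rw [Set.uIoc_of_le hrs] at hv
      rw [Real.norm_eq_abs]
      calc |f (u, v)| ≤ A + B * (u ^ 2 + v ^ 2) := hfg u v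
        _ ≤ A + B * (u ^ 2 + (r ^ 2 + s ^ 2)) := by
            have := sq_le_of_mem (le_of_lt hv.1) hv.2
            nlinarith
  -- value of the polynomial inner integral
  have hpoly : ∀ u : ℝ, (∫ v in r..s, (A + B * (u ^ 2 + v ^ 2)))
      = A * (s - r) + B * (u ^ 2 * (s - r) + (s ^ 3 - r ^ 3) / 3) := by
    intro u
    have h1 : (∫ v in r..s, (A + B * (u ^ 2 + v ^ 2)))
        = ∫ v in r..s, ((A + B * u ^ 2) + B * v ^ 2) := by
      apply intervalIntegral.integral_congr
      intro v _; ring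
    rw [h1, intervalIntegral.integral_add (f := fun _ => A + B * u ^ 2)
      (g := fun v => B * v ^ 2) (intervalIntegrable_const)
      (((continuous_const.mul (continuous_pow 2)).intervalIntegrable r s)),
      intervalIntegral.integral_const, intervalIntegral.integral_const_mul, integral_pow]
    push_cast
    simp only [smul_eq_mul]
    ring
  -- pointwise bound on the inner integral
  have hg_bound : ∀ u : ℝ, |∫ v in r..s, f (u, v)|
      ≤ A * (s - r) + B * (u ^ 2 * (s - r) + (s ^ 3 - r ^ 3) / 3) := by
    intro u
    rw [← hpoly u]
    calc |∫ v in r..s, f (u, v)| ≤ ∫ v in r..s, |f (u, v)| :=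
          intervalIntegral.abs_integral_le_integral_abs hrs
      _ ≤ ∫ v in r..s, (A + B * (u ^ 2 + v ^ 2)) := by
          apply intervalIntegral.integral_mono_on hrs (hCv u).abs
            ((by continuity : Continuous fun v : ℝ => A + B * (u ^ 2 + v ^ 2)).intervalIntegrable r s)
          intro v _; exact hfg u v
  -- measurability of the inner integral
  have hgm : StronglyMeasurable (fun u => ∫ v in r..s, f (u, v)) := by
    have h2 : StronglyMeasurable (fun u => ∫ v in Set.Ioc r s, f (u, v)) :=
      hfm.stronglyMeasurable.integral_prod_right' (ν := volume.restrict (Set.Ioc r s))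
    have h3 : (fun u => ∫ v in r..s, f (u, v)) = fun u => ∫ v in Set.Ioc r s, f (u, v) := by
      funext u
      rw [intervalIntegral.intervalIntegral_eq_integral_uIoc, Set.uIoc_of_le hrs]
      simp [hrs]
    rw [h3]; exact h2
  -- outer integrability
  have hCu : IntervalIntegrable (fun u => ∫ v in r..s, f (u, v)) volume p q := by
    rw [intervalIntegrable_iff]
    refine Integrable.mono'
      (g := fun _ => A * (s - r) + B * ((p ^ 2 + q ^ 2) * (s - r) + (s ^ 3 - r ^ 3) / 3))
      (integrableOn_const ?_) hgm.aestronglyMeasurable.restrict ?_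
    · simp [Set.uIoc, Real.volume_Ioc]
    · refine (ae_restrict_iff' measurableSet_uIoc).2 (Filter.Eventually.of_forall ?_)
      intro u hu
      rw [Set.uIoc_of_le hpq] at hu
      rw [Real.norm_eq_abs]
      calc |∫ v in r..s, f (u, v)| ≤ A * (s - r) + B * (u ^ 2 * (s - r) + (s ^ 3 - r ^ 3) / 3) :=
            hg_bound u
        _ ≤ _ := by
            have h5 := sq_le_of_mem (le_of_lt hu.1) hu.2
            have h6 : 0 ≤ B * (s - r) * (p ^ 2 + q ^ 2 - u ^ 2) :=
              mul_nonneg (mul_nonneg hB (sub_nonneg.2 hrs)) (sub_nonneg.2 h5)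
            beta_reduce
            nlinarith [h6]
  -- final computation
  have hpoly2 : (∫ u in p..q, (A * (s - r) + B * (u ^ 2 * (s - r) + (s ^ 3 - r ^ 3) / 3)))
      = A * ((q - p) * (s - r)) +
        B * ((s - r) * (q ^ 3 - p ^ 3) / 3 + (q - p) * (s ^ 3 - r ^ 3) / 3) := by
    have h1 : (∫ u in p..q, (A * (s - r) + B * (u ^ 2 * (s - r) + (s ^ 3 - r ^ 3) / 3)))
        = ∫ u in p..q, ((A * (s - r) + B * (s ^ 3 - r ^ 3) / 3) + (B * (s - r)) * u ^ 2) := by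
      apply intervalIntegral.integral_congr; intro u _; ring
    rw [h1, intervalIntegral.integral_add (f := fun _ => A * (s - r) + B * (s ^ 3 - r ^ 3) / 3)
      (g := fun u => B * (s - r) * u ^ 2) (intervalIntegrable_const)
      (((continuous_const.mul (continuous_pow 2)).intervalIntegrable p q)),
      intervalIntegral.integral_const, intervalIntegral.integral_const_mul, integral_pow]
    push_cast
    simp only [smul_eq_mul]
    ring
  calc |∫ u in p..q, ∫ v in r..s, f (u, v)|
      ≤ ∫ u in p..q, |∫ v in r..s, f (u, v)| :=
        intervalIntegral.abs_integral_le_integral_abs hpq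
    _ ≤ ∫ u in p..q, (A * (s - r) + B * (u ^ 2 * (s - r) + (s ^ 3 - r ^ 3) / 3)) := by
        apply intervalIntegral.integral_mono_on hpq hCu.abs
          ((by continuity : Continuous fun u : ℝ =>
            A * (s - r) + B * (u ^ 2 * (s - r) + (s ^ 3 - r ^ 3) / 3)).intervalIntegrable p q)
        intro u _; exact hg_bound u
    _ = _ := hpoly2

lemma val_lemma (w ak bk cj dj A B kk jj : ℝ) (hw : w ≠ 0)
    (hba : bk - ak ≠ 0) (hdc : dj - cj ≠ 0) :
    (w ^ 2 / ((bk - ak) * (dj - cj))) *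
      (A * ((((kk + bk) / w) - ((kk + ak) / w)) * (((jj + dj) / w) - ((jj + cj) / w))) +
        B * (((((jj + dj) / w) - ((jj + cj) / w)) *
                (((kk + bk) / w) ^ 3 - ((kk + ak) / w) ^ 3)) / 3 +
             ((((kk + bk) / w) - ((kk + ak) / w)) *
                (((jj + dj) / w) ^ 3 - ((jj + cj) / w) ^ 3)) / 3))
    = A + B * ((((kk + ak) / w) ^ 2 + ((kk + ak) / w) * ((kk + bk) / w) +
          ((kk + bk) / w) ^ 2) / 3 +
        ((((jj + cj) / w) ^ 2 + ((jj + cj) / w) * ((jj + dj) / w) +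
          ((jj + dj) / w) ^ 2) / 3)) := by
  field_simp
  ring

lemma scalar1 (w kk α K aa bb : ℝ) (hw : 0 < w) (hab : aa + bb = α)
    (hKa : |aa| ≤ K) (hKb : |bb| ≤ K) :
    ((kk + aa) / w) ^ 2 + ((kk + aa) / w) * ((kk + bb) / w) + ((kk + bb) / w) ^ 2
      ≤ 3 * ((kk ^ 2 + |α| * |kk| + K ^ 2) / w ^ 2) := by
  have hw' : w ≠ 0 := ne_of_gt hw
  have e : ((kk + aa) / w) ^ 2 + ((kk + aa) / w) * ((kk + bb) / w) + ((kk + bb) / w) ^ 2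
      = (3 * kk ^ 2 + 3 * kk * α + (aa ^ 2 + aa * bb + bb ^ 2)) / w ^ 2 := by
    rw [← hab]; field_simp; ring
  rw [e, show (3:ℝ) * ((kk ^ 2 + |α| * |kk| + K ^ 2) / w ^ 2)
      = (3 * kk ^ 2 + 3 * (|α| * |kk|) + 3 * K ^ 2) / w ^ 2 from by ring]
  gcongr ?_ / _
  have h2 : kk * α ≤ |kk| * |α| := by rw [← abs_mul]; exact le_abs_self _
  have h3 : aa ^ 2 + aa * bb + bb ^ 2 ≤ 3 * K ^ 2 := by
    nlinarith [abs_le.1 hKa, abs_le.1 hKb]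
  nlinarith [h2, h3]

lemma scalar2 (A B w x y α β K kk jj S1 S2 : ℝ) (hA : 0 ≤ A) (hB : 0 ≤ B) (hw : 0 < w)
    (h1 : S1 ≤ 3 * ((kk ^ 2 + |α| * |kk| + K ^ 2) / w ^ 2))
    (h2 : S2 ≤ 3 * ((jj ^ 2 + |β| * |jj| + K ^ 2) / w ^ 2)) :
    A + B * (S1 / 3 + S2 / 3) ≤
      (A + B * (x ^ 2 + y ^ 2) + (B / w) * (|α| * |x| + |β| * |y|) + 2 * B * K ^ 2 / w ^ 2) +
        ((2 * B * |x| / w + B * |α| / w ^ 2) * |kk - w * x| +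
          ((2 * B * |y| / w + B * |β| / w ^ 2) * |jj - w * y| +
            ((B / w ^ 2) * |kk - w * x| ^ 2 + (B / w ^ 2) * |jj - w * y| ^ 2))) := by
  have hw' : w ≠ 0 := ne_of_gt hw
  set Pk : ℝ := |kk - w * x| with hPk
  set Pj : ℝ := |jj - w * y| with hPj
  have h4 : |kk| ≤ Pk + w * |x| := by
    calc |kk| = |(kk - w * x) + w * x| := by ring_nf
      _ ≤ |kk - w * x| + |w * x| := abs_add_le _ _
      _ = Pk + w * |x| := by rw [hPk, abs_mul, abs_of_pos hw]
  have h4' : |jj| ≤ Pj + w * |y| := by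
    calc |jj| = |(jj - w * y) + w * y| := by ring_nf
      _ ≤ |jj - w * y| + |w * y| := abs_add_le _ _
      _ = Pj + w * |y| := by rw [hPj, abs_mul, abs_of_pos hw]
  have h5 : kk ^ 2 ≤ Pk ^ 2 + 2 * (w * |x|) * Pk + w ^ 2 * x ^ 2 := by
    have h := pow_le_pow_left₀ (abs_nonneg kk) h4 2
    rw [sq_abs] at h
    calc kk ^ 2 ≤ (Pk + w * |x|) ^ 2 := h
      _ = Pk ^ 2 + 2 * (w * |x|) * Pk + w ^ 2 * |x| ^ 2 := by ring
      _ = Pk ^ 2 + 2 * (w * |x|) * Pk + w ^ 2 * x ^ 2 := by rw [sq_abs x]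
  have h5' : jj ^ 2 ≤ Pj ^ 2 + 2 * (w * |y|) * Pj + w ^ 2 * y ^ 2 := by
    have h := pow_le_pow_left₀ (abs_nonneg jj) h4' 2
    rw [sq_abs] at h
    calc jj ^ 2 ≤ (Pj + w * |y|) ^ 2 := h
      _ = Pj ^ 2 + 2 * (w * |y|) * Pj + w ^ 2 * |y| ^ 2 := by ring
      _ = Pj ^ 2 + 2 * (w * |y|) * Pj + w ^ 2 * y ^ 2 := by rw [sq_abs y]
  have step1 : A + B * (S1 / 3 + S2 / 3)
      ≤ A + B * (((kk ^ 2 + |α| * |kk| + K ^ 2) / w ^ 2) +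
          ((jj ^ 2 + |β| * |jj| + K ^ 2) / w ^ 2)) := by
    gcongr A + B * (?_ + ?_)
    · linarith [h1]
    · linarith [h2]
  have e2 : (A + B * (x ^ 2 + y ^ 2) + (B / w) * (|α| * |x| + |β| * |y|) +
        2 * B * K ^ 2 / w ^ 2) +
      ((2 * B * |x| / w + B * |α| / w ^ 2) * Pk +
        ((2 * B * |y| / w + B * |β| / w ^ 2) * Pj +
          ((B / w ^ 2) * Pk ^ 2 + (B / w ^ 2) * Pj ^ 2)))
      = A + B * (((Pk ^ 2 + 2 * (w * |x|) * Pk + w ^ 2 * x ^ 2 + |α| * (Pk + w * |x|) + K ^ 2)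
            / w ^ 2) +
          ((Pj ^ 2 + 2 * (w * |y|) * Pj + w ^ 2 * y ^ 2 + |β| * (Pj + w * |y|) + K ^ 2)
            / w ^ 2)) := by
    field_simp
    ring
  rw [e2]
  refine le_trans step1 ?_
  gcongr A + B * (?_ / _ + ?_ / _)
  · have h7 := mul_le_mul_of_nonneg_left h4 (abs_nonneg α)
    linarith [h5, h7]
  · have h7 := mul_le_mul_of_nonneg_left h4' (abs_nonneg β)
    linarith [h5', h7]

lemma term_bound (φv : ℝ) (f : ℝ × ℝ → ℝ) (hfm : Measurable f)
    (A B : ℝ) (hA : 0 ≤ A) (hB : 0 ≤ B)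
    (hfg : ∀ u v : ℝ, |f (u, v)| ≤ A + B * (u ^ 2 + v ^ 2))
    (w x y α β K ak bk cj dj : ℝ) (hw : 0 < w)
    (kk jj : ℝ)
    (hab : ak + bk = α) (hcd : cj + dj = β)
    (hba : 0 < bk - ak) (hdc : 0 < dj - cj)
    (hKa : |ak| ≤ K) (hKb : |bk| ≤ K) (hKc : |cj| ≤ K) (hKd : |dj| ≤ K) :
    |(w ^ 2 / ((bk - ak) * (dj - cj))) * φv *
        ∫ u in ((kk + ak) / w)..((kk + bk) / w),
          ∫ v in ((jj + cj) / w)..((jj + dj) / w), f (u, v)| ≤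
      (A + B * (x ^ 2 + y ^ 2) + (B / w) * (|α| * |x| + |β| * |y|) + 2 * B * K ^ 2 / w ^ 2) *
          |φv| +
        ((2 * B * |x| / w + B * |α| / w ^ 2) * (|φv| * |kk - w * x|) +
          ((2 * B * |y| / w + B * |β| / w ^ 2) * (|φv| * |jj - w * y|) +
            ((B / w ^ 2) * (|φv| * |kk - w * x| ^ 2) +
              (B / w ^ 2) * (|φv| * |jj - w * y| ^ 2)))) := by
  have hw' : w ≠ 0 := ne_of_gt hw
  have hpq : (kk + ak) / w ≤ (kk + bk) / w := by gcongr; linarith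
  have hrs : (jj + cj) / w ≤ (jj + dj) / w := by gcongr; linarith
  have hI := integ_bound f hfm A B hA hB hfg _ _ _ _ hpq hrs
  have hC : 0 < w ^ 2 / ((bk - ak) * (dj - cj)) := div_pos (by positivity) (mul_pos hba hdc)
  have hval := val_lemma w ak bk cj dj A B kk jj hw' (ne_of_gt hba) (ne_of_gt hdc)
  have h1 := scalar1 w kk α K ak bk hw hab hKa hKb
  have h2 := scalar1 w jj β K cj dj hw hcd hKc hKd
  have hZ := scalar2 A B w x y α β K kk jj _ _ hA hB hw h1 h2
  have h6 : (w ^ 2 / ((bk - ak) * (dj - cj))) *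
      (A * ((((kk + bk) / w) - ((kk + ak) / w)) * (((jj + dj) / w) - ((jj + cj) / w))) +
        B * (((((jj + dj) / w) - ((jj + cj) / w)) *
                (((kk + bk) / w) ^ 3 - ((kk + ak) / w) ^ 3)) / 3 +
             ((((kk + bk) / w) - ((kk + ak) / w)) *
                (((jj + dj) / w) ^ 3 - ((jj + cj) / w) ^ 3)) / 3)) ≤
      (A + B * (x ^ 2 + y ^ 2) + (B / w) * (|α| * |x| + |β| * |y|) + 2 * B * K ^ 2 / w ^ 2) +
        ((2 * B * |x| / w + B * |α| / w ^ 2) * |kk - w * x| +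
          ((2 * B * |y| / w + B * |β| / w ^ 2) * |jj - w * y| +
            ((B / w ^ 2) * |kk - w * x| ^ 2 + (B / w ^ 2) * |jj - w * y| ^ 2))) := by
    rw [hval]; exact hZ
  rw [abs_mul, abs_mul, abs_of_pos hC]
  calc (w ^ 2 / ((bk - ak) * (dj - cj))) * |φv| *
        |∫ u in ((kk + ak) / w)..((kk + bk) / w),
          ∫ v in ((jj + cj) / w)..((jj + dj) / w), f (u, v)|
      ≤ (w ^ 2 / ((bk - ak) * (dj - cj))) * |φv| *
        (A * ((((kk + bk) / w) - ((kk + ak) / w)) * (((jj + dj) / w) - ((jj + cj) / w))) +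
          B * (((((jj + dj) / w) - ((jj + cj) / w)) *
                  (((kk + bk) / w) ^ 3 - ((kk + ak) / w) ^ 3)) / 3 +
               ((((kk + bk) / w) - ((kk + ak) / w)) *
                  (((jj + dj) / w) ^ 3 - ((jj + cj) / w) ^ 3)) / 3)) :=
        mul_le_mul_of_nonneg_left hI (mul_nonneg hC.le (abs_nonneg φv))
    _ = |φv| * ((w ^ 2 / ((bk - ak) * (dj - cj))) *
        (A * ((((kk + bk) / w) - ((kk + ak) / w)) * (((jj + dj) / w) - ((jj + cj) / w))) +
          B * (((((jj + dj) / w) - ((jj + cj) / w)) *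
                  (((kk + bk) / w) ^ 3 - ((kk + ak) / w) ^ 3)) / 3 +
               ((((kk + bk) / w) - ((kk + ak) / w)) *
                  (((jj + dj) / w) ^ 3 - ((jj + cj) / w) ^ 3)) / 3))) := by ring
    _ ≤ |φv| * ((A + B * (x ^ 2 + y ^ 2) + (B / w) * (|α| * |x| + |β| * |y|) +
          2 * B * K ^ 2 / w ^ 2) +
        ((2 * B * |x| / w + B * |α| / w ^ 2) * |kk - w * x| +
          ((2 * B * |y| / w + B * |β| / w ^ 2) * |jj - w * y| +
            ((B / w ^ 2) * |kk - w * x| ^ 2 + (B / w ^ 2) * |jj - w * y| ^ 2)))) :=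
        mul_le_mul_of_nonneg_left h6 (abs_nonneg φv)
    _ = _ := by ring


/-- absolute convergence and growth bound for the Kantorovich
sampling series applied to a function of quadratic growth. -/
theorem kantorovich_quadratic_growth
    (φ f : ℝ × ℝ → ℝ) (a b c d : ℤ → ℝ)
    (A B : ℝ) (hA : 0 < A) (hB : 0 < B)
    (hfm : Measurable f) (hfg : ∀ x y : ℝ, |f (x, y)| ≤ A + B * (x ^ 2 + y ^ 2))
    -- absolute moments of φ
    (M₀ M₁₀ M₀₁ M₂₀ M₀₂ : ℝ)
    (hM₀ : ∀ x y : ℝ,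
      Summable (fun kj : ℤ × ℤ => |φ (x - (kj.1 : ℝ), y - (kj.2 : ℝ))|) ∧
      (∑' kj : ℤ × ℤ, |φ (x - (kj.1 : ℝ), y - (kj.2 : ℝ))|) ≤ M₀)
    (hM₁₀ : ∀ x y : ℝ,
      Summable (fun kj : ℤ × ℤ => |φ (x - (kj.1 : ℝ), y - (kj.2 : ℝ))| * |(kj.1 : ℝ) - x|) ∧
      (∑' kj : ℤ × ℤ, |φ (x - (kj.1 : ℝ), y - (kj.2 : ℝ))| * |(kj.1 : ℝ) - x|) ≤ M₁₀)
    (hM₀₁ : ∀ x y : ℝ,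
      Summable (fun kj : ℤ × ℤ => |φ (x - (kj.1 : ℝ), y - (kj.2 : ℝ))| * |(kj.2 : ℝ) - y|) ∧
      (∑' kj : ℤ × ℤ, |φ (x - (kj.1 : ℝ), y - (kj.2 : ℝ))| * |(kj.2 : ℝ) - y|) ≤ M₀₁)
    (hM₂₀ : ∀ x y : ℝ,
      Summable (fun kj : ℤ × ℤ => |φ (x - (kj.1 : ℝ), y - (kj.2 : ℝ))| * |(kj.1 : ℝ) - x| ^ 2) ∧
      (∑' kj : ℤ × ℤ, |φ (x - (kj.1 : ℝ), y - (kj.2 : ℝ))| * |(kj.1 : ℝ) - x| ^ 2) ≤ M₂₀)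
    (hM₀₂ : ∀ x y : ℝ,
      Summable (fun kj : ℤ × ℤ => |φ (x - (kj.1 : ℝ), y - (kj.2 : ℝ))| * |(kj.2 : ℝ) - y| ^ 2) ∧
      (∑' kj : ℤ × ℤ, |φ (x - (kj.1 : ℝ), y - (kj.2 : ℝ))| * |(kj.2 : ℝ) - y| ^ 2) ≤ M₀₂)
    -- node sequences
    (α β l₀ s₀ K : ℝ) (hl₀ : 0 < l₀) (hs₀ : 0 < s₀)
    (hα : ∀ k, a k + b k = α) (hβ : ∀ j, c j + d j = β)
    (hlb : ∀ k, l₀ ≤ b k - a k) (hsb : ∀ j, s₀ ≤ d j - c j)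
    (hK : ∀ k : ℤ, |a k| ≤ K ∧ |b k| ≤ K ∧ |c k| ≤ K ∧ |d k| ≤ K)
    (w x y : ℝ) (hw : 0 < w) :
    Summable (fun kj : ℤ × ℤ =>
      |(w ^ 2 / ((b kj.1 - a kj.1) * (d kj.2 - c kj.2))) *
        φ (w * x - (kj.1 : ℝ), w * y - (kj.2 : ℝ)) *
        ∫ u in (((kj.1 : ℝ) + a kj.1) / w)..(((kj.1 : ℝ) + b kj.1) / w),
          ∫ v in (((kj.2 : ℝ) + c kj.2) / w)..(((kj.2 : ℝ) + d kj.2) / w), f (u, v)|) ∧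
    |∑' kj : ℤ × ℤ,
      (w ^ 2 / ((b kj.1 - a kj.1) * (d kj.2 - c kj.2))) *
        φ (w * x - (kj.1 : ℝ), w * y - (kj.2 : ℝ)) *
        ∫ u in (((kj.1 : ℝ) + a kj.1) / w)..(((kj.1 : ℝ) + b kj.1) / w),
          ∫ v in (((kj.2 : ℝ) + c kj.2) / w)..(((kj.2 : ℝ) + d kj.2) / w), f (u, v)|
      ≤ M₀ * (A + B * (x ^ 2 + y ^ 2) + (B / w) * (|α| * |x| + |β| * |y|) + 2 * B * K ^ 2 / w ^ 2)
        + (2 * B / w) * (|x| * M₁₀ + |y| * M₀₁)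
        + (B / w ^ 2) * (|α| * M₁₀ + |β| * M₀₁)
        + (B / w ^ 2) * (M₂₀ + M₀₂) := by
  have hS0 := hM₀ (w * x) (w * y)
  have hS1 := hM₁₀ (w * x) (w * y)
  have hS2 := hM₀₁ (w * x) (w * y)
  have hS3 := hM₂₀ (w * x) (w * y)
  have hS4 := hM₀₂ (w * x) (w * y)
  -- the comparison series
  set T : ℤ × ℤ → ℝ := fun kj =>
    (w ^ 2 / ((b kj.1 - a kj.1) * (d kj.2 - c kj.2))) *
      φ (w * x - (kj.1 : ℝ), w * y - (kj.2 : ℝ)) *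
      ∫ u in (((kj.1 : ℝ) + a kj.1) / w)..(((kj.1 : ℝ) + b kj.1) / w),
        ∫ v in (((kj.2 : ℝ) + c kj.2) / w)..(((kj.2 : ℝ) + d kj.2) / w), f (u, v) with hT
  have hsum0 : Summable (fun kj : ℤ × ℤ =>
      (A + B * (x ^ 2 + y ^ 2) + (B / w) * (|α| * |x| + |β| * |y|) + 2 * B * K ^ 2 / w ^ 2) *
        |φ (w * x - (kj.1 : ℝ), w * y - (kj.2 : ℝ))|) := hS0.1.mul_left _
  have hsum1 : Summable (fun kj : ℤ × ℤ =>
      (2 * B * |x| / w + B * |α| / w ^ 2) *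
        (|φ (w * x - (kj.1 : ℝ), w * y - (kj.2 : ℝ))| * |(kj.1 : ℝ) - w * x|)) :=
    hS1.1.mul_left _
  have hsum2 : Summable (fun kj : ℤ × ℤ =>
      (2 * B * |y| / w + B * |β| / w ^ 2) *
        (|φ (w * x - (kj.1 : ℝ), w * y - (kj.2 : ℝ))| * |(kj.2 : ℝ) - w * y|)) :=
    hS2.1.mul_left _
  have hsum3 : Summable (fun kj : ℤ × ℤ =>
      (B / w ^ 2) *
        (|φ (w * x - (kj.1 : ℝ), w * y - (kj.2 : ℝ))| * |(kj.1 : ℝ) - w * x| ^ 2)) :=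
    hS3.1.mul_left _
  have hsum4 : Summable (fun kj : ℤ × ℤ =>
      (B / w ^ 2) *
        (|φ (w * x - (kj.1 : ℝ), w * y - (kj.2 : ℝ))| * |(kj.2 : ℝ) - w * y| ^ 2)) :=
    hS4.1.mul_left _
  set E : ℤ × ℤ → ℝ := fun kj =>
    (A + B * (x ^ 2 + y ^ 2) + (B / w) * (|α| * |x| + |β| * |y|) + 2 * B * K ^ 2 / w ^ 2) *
        |φ (w * x - (kj.1 : ℝ), w * y - (kj.2 : ℝ))| +
      ((2 * B * |x| / w + B * |α| / w ^ 2) *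
          (|φ (w * x - (kj.1 : ℝ), w * y - (kj.2 : ℝ))| * |(kj.1 : ℝ) - w * x|) +
        ((2 * B * |y| / w + B * |β| / w ^ 2) *
            (|φ (w * x - (kj.1 : ℝ), w * y - (kj.2 : ℝ))| * |(kj.2 : ℝ) - w * y|) +
          ((B / w ^ 2) *
              (|φ (w * x - (kj.1 : ℝ), w * y - (kj.2 : ℝ))| * |(kj.1 : ℝ) - w * x| ^ 2) +
            (B / w ^ 2) *
              (|φ (w * x - (kj.1 : ℝ), w * y - (kj.2 : ℝ))| * |(kj.2 : ℝ) - w * y| ^ 2)))) with hE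
  have hEsum : Summable E := hsum0.add (hsum1.add (hsum2.add (hsum3.add hsum4)))
  have hTE : ∀ kj : ℤ × ℤ, |T kj| ≤ E kj := by
    intro kj
    exact term_bound (φ (w * x - (kj.1 : ℝ), w * y - (kj.2 : ℝ))) f hfm A B hA.le hB.le hfg
      w x y α β K (a kj.1) (b kj.1) (c kj.2) (d kj.2) hw ((kj.1 : ℝ)) ((kj.2 : ℝ))
      (hα kj.1) (hβ kj.2) (lt_of_lt_of_le hl₀ (hlb kj.1)) (lt_of_lt_of_le hs₀ (hsb kj.2))
      (hK kj.1).1 (hK kj.1).2.1 (hK kj.2).2.2.1 (hK kj.2).2.2.2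
  have hTabs : Summable (fun kj : ℤ × ℤ => |T kj|) :=
    Summable.of_nonneg_of_le (fun kj => abs_nonneg _) hTE hEsum
  refine ⟨hTabs, ?_⟩
  have habs1 : |∑' kj : ℤ × ℤ, T kj| ≤ ∑' kj : ℤ × ℤ, |T kj| := by
    have h := norm_tsum_le_tsum_norm (f := T) (by simpa [Real.norm_eq_abs] using hTabs)
    simpa [Real.norm_eq_abs] using h
  have hc0 : (0:ℝ) ≤ A + B * (x ^ 2 + y ^ 2) + (B / w) * (|α| * |x| + |β| * |y|) +
      2 * B * K ^ 2 / w ^ 2 := by positivity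
  have hc1 : (0:ℝ) ≤ 2 * B * |x| / w + B * |α| / w ^ 2 := by positivity
  have hc2 : (0:ℝ) ≤ 2 * B * |y| / w + B * |β| / w ^ 2 := by positivity
  have hc3 : (0:ℝ) ≤ B / w ^ 2 := by positivity
  calc |∑' kj : ℤ × ℤ, T kj| ≤ ∑' kj : ℤ × ℤ, |T kj| := habs1
    _ ≤ ∑' kj : ℤ × ℤ, E kj := Summable.tsum_le_tsum hTE hTabs hEsum
    _ = (A + B * (x ^ 2 + y ^ 2) + (B / w) * (|α| * |x| + |β| * |y|) + 2 * B * K ^ 2 / w ^ 2) *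
          (∑' kj : ℤ × ℤ, |φ (w * x - (kj.1 : ℝ), w * y - (kj.2 : ℝ))|) +
        ((2 * B * |x| / w + B * |α| / w ^ 2) *
            (∑' kj : ℤ × ℤ, |φ (w * x - (kj.1 : ℝ), w * y - (kj.2 : ℝ))| * |(kj.1 : ℝ) - w * x|) +
          ((2 * B * |y| / w + B * |β| / w ^ 2) *
              (∑' kj : ℤ × ℤ, |φ (w * x - (kj.1 : ℝ), w * y - (kj.2 : ℝ))| * |(kj.2 : ℝ) - w * y|) +
            ((B / w ^ 2) *
                (∑' kj : ℤ × ℤ,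
                  |φ (w * x - (kj.1 : ℝ), w * y - (kj.2 : ℝ))| * |(kj.1 : ℝ) - w * x| ^ 2) +
              (B / w ^ 2) *
                (∑' kj : ℤ × ℤ,
                  |φ (w * x - (kj.1 : ℝ), w * y - (kj.2 : ℝ))| * |(kj.2 : ℝ) - w * y| ^ 2)))) := by
        rw [hE]
        rw [Summable.tsum_add hsum0 (hsum1.add (hsum2.add (hsum3.add hsum4))),
          Summable.tsum_add hsum1 (hsum2.add (hsum3.add hsum4)),
          Summable.tsum_add hsum2 (hsum3.add hsum4),
          Summable.tsum_add hsum3 hsum4,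
          tsum_mul_left, tsum_mul_left, tsum_mul_left, tsum_mul_left, tsum_mul_left]
    _ ≤ (A + B * (x ^ 2 + y ^ 2) + (B / w) * (|α| * |x| + |β| * |y|) + 2 * B * K ^ 2 / w ^ 2) *
          M₀ +
        ((2 * B * |x| / w + B * |α| / w ^ 2) * M₁₀ +
          ((2 * B * |y| / w + B * |β| / w ^ 2) * M₀₁ +
            ((B / w ^ 2) * M₂₀ + (B / w ^ 2) * M₀₂))) := by
        gcongr
        · exact hS0.2
        · exact hS1.2
        · exact hS2.2
        · exact hS3.2
        · exact hS4.2
    _ = _ := by ring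
end

section
/- (Quantitative estimate via modulus of continuity) Let f: ℝ² → ℝ be uniformly continuous and bounded, and suppose sup_{k,j}{|a_k|,|b_k|,|c_j|,|d_j|} ≤ K. Assume M₀(φ), M¹_{(1,0)}(φ), M¹_{(0,1)}(φ), M²_{(1,1)}(φ) are all finite. Then for all (x,y) ∈ ℝ², w > 0, δ₁ > 0, δ₂ > 0: |K_w^φ f(x,y) − f(x,y)| ≤ ω(f, δ₁, δ₂)·[M₀(φ) + (K·M₀(φ)/w)(1/δ₁ + 1/δ₂ + K/(w δ₁ δ₂)) + (1/w)(M¹_{(1,0)}(φ) + M¹_{(0,1)}(φ))(1/δ₁ + 1/δ₂) + (1/(w²δ₁δ₂))(K(M¹_{(1,0)}(φ)+M¹_{(0,1)}(φ)) + M²_{(1,1)}(φ))]. -/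
open MeasureTheory

/-- The bivariate (total) modulus of continuity. -/
noncomputable def biModulus (f : ℝ × ℝ → ℝ) (δ₁ δ₂ : ℝ) : ℝ :=
  sSup {r : ℝ | ∃ t s x y : ℝ, |t - x| ≤ δ₁ ∧ |s - y| ≤ δ₂ ∧ r = |f (t, s) - f (x, y)|}

lemma biModulus_ge (f : ℝ × ℝ → ℝ) (δ₁ δ₂ : ℝ) (hfb : ∃ C, ∀ p, |f p| ≤ C)
    {t s x y : ℝ} (h1 : |t - x| ≤ δ₁) (h2 : |s - y| ≤ δ₂) :
    |f (t, s) - f (x, y)| ≤ biModulus f δ₁ δ₂ := by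
  obtain ⟨C, hC⟩ := hfb
  apply le_csSup
  · refine ⟨2 * C, ?_⟩
    rintro r ⟨t, s, x, y, -, -, rfl⟩
    calc |f (t, s) - f (x, y)| ≤ |f (t, s)| + |f (x, y)| := abs_sub _ _
      _ ≤ C + C := add_le_add (hC _) (hC _)
      _ = 2 * C := by ring
  · exact ⟨t, s, x, y, h1, h2, rfl⟩

lemma biModulus_nonneg (f : ℝ × ℝ → ℝ) {δ₁ δ₂ : ℝ} (hfb : ∃ C, ∀ p, |f p| ≤ C)
    (h1 : 0 ≤ δ₁) (h2 : 0 ≤ δ₂) : 0 ≤ biModulus f δ₁ δ₂ := by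
  have := biModulus_ge f δ₁ δ₂ hfb (t := 0) (x := 0) (s := 0) (y := 0)
    (by simpa using h1) (by simpa using h2)
  simpa using this

lemma biModulus_bound (f : ℝ × ℝ → ℝ) {δ₁ δ₂ : ℝ} (hfb : ∃ C, ∀ p, |f p| ≤ C)
    (h1 : 0 < δ₁) (h2 : 0 < δ₂) (t s x y : ℝ) :
    |f (t, s) - f (x, y)| ≤
      biModulus f δ₁ δ₂ * (1 + |t - x| / δ₁) * (1 + |s - y| / δ₂) := by
  set ω := biModulus f δ₁ δ₂ with hω
  have hω0 : 0 ≤ ω := biModulus_nonneg f hfb h1.le h2.le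
  set A := |t - x| / δ₁ with hA
  set B := |s - y| / δ₂ with hB
  have hA0 : 0 ≤ A := by positivity
  have hB0 : 0 ≤ B := by positivity
  set n := ⌈max A B⌉₊ with hn
  rcases Nat.eq_zero_or_pos n with h0 | hpos
  · have hmax : max A B ≤ 0 := Nat.ceil_eq_zero.mp h0
    have hA' : A = 0 := le_antisymm (le_trans (le_max_left A B) hmax) hA0
    have hB' : B = 0 := le_antisymm (le_trans (le_max_right A B) hmax) hB0
    have ht : t = x := by
      have : |t - x| = 0 := by
        rw [hA] at hA'
        rcases div_eq_zero_iff.mp hA' with h | h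
        · exact h
        · linarith
      linarith [abs_nonneg (t - x), abs_eq_zero.mp this, sub_eq_zero.mp (abs_eq_zero.mp this)]
    have hs' : s = y := by
      have : |s - y| = 0 := by
        rw [hB] at hB'
        rcases div_eq_zero_iff.mp hB' with h | h
        · exact h
        · linarith
      exact sub_eq_zero.mp (abs_eq_zero.mp this)
    subst ht; subst hs'
    simp only [sub_self, abs_zero]
    positivity
  · -- telescoping
    have hnR : (0 : ℝ) < n := by exact_mod_cast hpos
    set p : ℕ → ℝ × ℝ := fun i => (x + i * (t - x) / n, y + i * (s - y) / n) with hp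
    have hstep : ∀ i, |f (p (i + 1)) - f (p i)| ≤ ω := by
      intro i
      apply biModulus_ge f δ₁ δ₂ hfb
      · have : ((i : ℝ) + 1) * (t - x) / n - i * (t - x) / n = (t - x) / n := by
          field_simp; ring
        simp only [hp, Nat.cast_add, Nat.cast_one]
        rw [show x + ((i : ℝ) + 1) * (t - x) / n - (x + i * (t - x) / n)
            = (t - x) / n by field_simp; ring]
        rw [abs_div, abs_of_pos hnR, div_le_iff₀ hnR]
        have hAn : A ≤ n := le_trans (le_max_left A B) (Nat.le_ceil _)
        have : |t - x| = A * δ₁ := by rw [hA]; field_simp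
        rw [this]
        calc A * δ₁ ≤ (n : ℝ) * δ₁ := by gcongr
          _ = δ₁ * n := by ring
      · simp only [hp, Nat.cast_add, Nat.cast_one]
        rw [show y + ((i : ℝ) + 1) * (s - y) / n - (y + i * (s - y) / n)
            = (s - y) / n by field_simp; ring]
        rw [abs_div, abs_of_pos hnR, div_le_iff₀ hnR]
        have hBn : B ≤ n := le_trans (le_max_right A B) (Nat.le_ceil _)
        have : |s - y| = B * δ₂ := by rw [hB]; field_simp
        rw [this]
        calc B * δ₂ ≤ (n : ℝ) * δ₂ := by gcongr
          _ = δ₂ * n := by ring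
    have htel : f (t, s) - f (x, y) = ∑ i ∈ Finset.range n, (f (p (i + 1)) - f (p i)) := by
      rw [Finset.sum_range_sub (fun i => f (p i))]
      congr 2
      · simp only [hp, Prod.mk.injEq]
        constructor <;> field_simp <;> ring
      · simp [hp]
    have hle : |f (t, s) - f (x, y)| ≤ n * ω := by
      rw [htel]
      calc |∑ i ∈ Finset.range n, (f (p (i + 1)) - f (p i))|
          ≤ ∑ i ∈ Finset.range n, |f (p (i + 1)) - f (p i)| := Finset.abs_sum_le_sum_abs _ _
        _ ≤ ∑ _i ∈ Finset.range n, ω := Finset.sum_le_sum fun i _ => hstep i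
        _ = n * ω := by simp [mul_comm]
    refine hle.trans ?_
    have hn1 : (n : ℝ) ≤ 1 + max A B := by
      have := Nat.ceil_lt_add_one (le_max_of_le_left hA0) (R := ℝ) (a := max A B)
      rw [hn]; push_cast; linarith
    have : (n : ℝ) * ω ≤ (1 + max A B) * ω := by gcongr
    refine this.trans ?_
    have hmax : max A B ≤ A + B + A * B := by
      rcases max_cases A B with ⟨h, -⟩ | ⟨h, -⟩ <;> rw [h] <;> nlinarith
    nlinarith [mul_nonneg hA0 hB0]

lemma bracket_expand (M₀ M₁₀ M₀₁ M₁₁ K w δ₁ δ₂ : ℝ) (hw : w ≠ 0) (h1 : δ₁ ≠ 0)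
    (h2 : δ₂ ≠ 0) :
    M₀ + (K * M₀ / w) * (1 / δ₁ + 1 / δ₂ + K / (w * δ₁ * δ₂))
      + (1 / w) * (M₁₀ + M₀₁) * (1 / δ₁ + 1 / δ₂)
      + (1 / (w ^ 2 * δ₁ * δ₂)) * (K * (M₁₀ + M₀₁) + M₁₁)
    = M₀ * ((1 + K/(w*δ₁)) * (1 + K/(w*δ₂))) + M₁₀ * ((1/(w*δ₁)) * (1 + K/(w*δ₂)))
      + M₀₁ * ((1 + K/(w*δ₁)) * (1/(w*δ₂))) + M₁₁ * ((1/(w*δ₁)) * (1/(w*δ₂)))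
      + M₁₀ * (1/(w*δ₂)) + M₀₁ * (1/(w*δ₁)) := by
  field_simp
  ring

set_option maxHeartbeats 2000000 in
/-- quantitative approximation estimate for the bivariate
Kantorovich sampling operators in terms of the bivariate modulus of continuity. -/
theorem kantorovich_modulus_estimate
    (φ f : ℝ × ℝ → ℝ) (a b c d : ℤ → ℝ)
    (hf : UniformContinuous f) (hfb : ∃ C, ∀ p, |f p| ≤ C)
    -- partition of unity
    (hpu : ∀ u v : ℝ, HasSum (fun kj : ℤ × ℤ => φ (u - (kj.1 : ℝ), v - (kj.2 : ℝ))) 1)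
    -- absolute moments of φ
    (M₀ M₁₀ M₀₁ M₁₁ : ℝ)
    (hM₀ : ∀ x y : ℝ,
      Summable (fun kj : ℤ × ℤ => |φ (x - (kj.1 : ℝ), y - (kj.2 : ℝ))|) ∧
      (∑' kj : ℤ × ℤ, |φ (x - (kj.1 : ℝ), y - (kj.2 : ℝ))|) ≤ M₀)
    (hM₁₀ : ∀ x y : ℝ,
      Summable (fun kj : ℤ × ℤ => |φ (x - (kj.1 : ℝ), y - (kj.2 : ℝ))| * |(kj.1 : ℝ) - x|) ∧
      (∑' kj : ℤ × ℤ, |φ (x - (kj.1 : ℝ), y - (kj.2 : ℝ))| * |(kj.1 : ℝ) - x|) ≤ M₁₀)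
    (hM₀₁ : ∀ x y : ℝ,
      Summable (fun kj : ℤ × ℤ => |φ (x - (kj.1 : ℝ), y - (kj.2 : ℝ))| * |(kj.2 : ℝ) - y|) ∧
      (∑' kj : ℤ × ℤ, |φ (x - (kj.1 : ℝ), y - (kj.2 : ℝ))| * |(kj.2 : ℝ) - y|) ≤ M₀₁)
    (hM₁₁ : ∀ x y : ℝ,
      Summable (fun kj : ℤ × ℤ =>
        |φ (x - (kj.1 : ℝ), y - (kj.2 : ℝ))| * |(kj.1 : ℝ) - x| * |(kj.2 : ℝ) - y|) ∧
      (∑' kj : ℤ × ℤ,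
        |φ (x - (kj.1 : ℝ), y - (kj.2 : ℝ))| * |(kj.1 : ℝ) - x| * |(kj.2 : ℝ) - y|) ≤ M₁₁)
    -- node sequences bounded by K
    (K : ℝ) (hab : ∀ k, a k < b k) (hcd : ∀ j, c j < d j)
    (hK : ∀ k : ℤ, |a k| ≤ K ∧ |b k| ≤ K ∧ |c k| ≤ K ∧ |d k| ≤ K) :
    ∀ (x y : ℝ) (w δ₁ δ₂ : ℝ), 0 < w → 0 < δ₁ → 0 < δ₂ →
      |kantorovich φ a b c d f w x y - f (x, y)|
        ≤ biModulus f δ₁ δ₂ *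
          (M₀ + (K * M₀ / w) * (1 / δ₁ + 1 / δ₂ + K / (w * δ₁ * δ₂))
            + (1 / w) * (M₁₀ + M₀₁) * (1 / δ₁ + 1 / δ₂)
            + (1 / (w ^ 2 * δ₁ * δ₂)) * (K * (M₁₀ + M₀₁) + M₁₁)) := by
  intro x y w δ₁ δ₂ hw hδ₁ hδ₂
  have hfc : Continuous f := hf.continuous
  have hω0 : 0 ≤ biModulus f δ₁ δ₂ := biModulus_nonneg f hfb hδ₁.le hδ₂.le
  set ω := biModulus f δ₁ δ₂ with hωdef
  have hK0 : 0 ≤ K := le_trans (abs_nonneg _) (hK 0).1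
  -- abbreviations
  set Φ : ℤ × ℤ → ℝ := fun kj => φ (w * x - (kj.1 : ℝ), w * y - (kj.2 : ℝ)) with hΦdef
  set E : ℝ := (1 + K/(w*δ₁)) * (1 + K/(w*δ₂)) with hEdef
  set F : ℝ := (1/(w*δ₁)) * (1 + K/(w*δ₂)) with hFdef
  set G : ℝ := (1 + K/(w*δ₁)) * (1/(w*δ₂)) with hGdef
  set H : ℝ := (1/(w*δ₁)) * (1/(w*δ₂)) with hHdef
  have hE0 : 0 ≤ E := by positivity
  have hF0 : 0 ≤ F := by positivity
  have hG0 : 0 ≤ G := by positivity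
  have hH0 : 0 ≤ H := by positivity
  set h : ℤ × ℤ → ℝ := fun kj =>
    |Φ kj| * E + (|Φ kj| * |(kj.1 : ℝ) - w*x|) * F
      + (|Φ kj| * |(kj.2 : ℝ) - w*y|) * G
      + (|Φ kj| * |(kj.1 : ℝ) - w*x| * |(kj.2 : ℝ) - w*y|) * H with hhdef
  obtain ⟨hS0, hT0⟩ := hM₀ (w*x) (w*y)
  obtain ⟨hS10, hT10⟩ := hM₁₀ (w*x) (w*y)
  obtain ⟨hS01, hT01⟩ := hM₀₁ (w*x) (w*y)
  obtain ⟨hS11, hT11⟩ := hM₁₁ (w*x) (w*y)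
  have hhsum : Summable h := by
    apply Summable.add
    apply Summable.add
    apply Summable.add
    · exact hS0.mul_right E
    · exact hS10.mul_right F
    · exact hS01.mul_right G
    · exact hS11.mul_right H
  set g : ℤ × ℤ → ℝ := fun kj =>
    (w ^ 2 / ((b kj.1 - a kj.1) * (d kj.2 - c kj.2))) * Φ kj *
      ∫ u in (((kj.1 : ℝ) + a kj.1) / w)..(((kj.1 : ℝ) + b kj.1) / w),
        ∫ v in (((kj.2 : ℝ) + c kj.2) / w)..(((kj.2 : ℝ) + d kj.2) / w),
          (f (u, v) - f (x, y)) with hgdef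
  -- pointwise bound
  have hgh : ∀ kj : ℤ × ℤ, |g kj| ≤ ω * h kj := by
    intro kj
    obtain ⟨k, j⟩ := kj
    set kR := (k : ℝ)
    set jR := (j : ℝ)
    set p := (kR + a k) / w with hpdef
    set q := (kR + b k) / w with hqdef
    set r := (jR + c j) / w with hrdef
    set s := (jR + d j) / w with hsdef
    have hba : 0 < b k - a k := sub_pos.mpr (hab k)
    have hdc : 0 < d j - c j := sub_pos.mpr (hcd j)
    have hpq : p < q := (div_lt_div_iff_of_pos_right hw).mpr (by linarith [hab k])
    have hrs : r < s := (div_lt_div_iff_of_pos_right hw).mpr (by linarith [hcd j])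
    set α := |kR - w*x| with hαdef
    set β := |jR - w*y| with hβdef
    have hα0 : 0 ≤ α := abs_nonneg _
    have hβ0 : 0 ≤ β := abs_nonneg _
    set D := ω * (1 + (α + K)/w/δ₁) * (1 + (β + K)/w/δ₂) with hDdef
    have hu : ∀ u ∈ Set.uIoc p q, |u - x| ≤ (α + K)/w := by
      intro u hu
      rw [Set.uIoc_of_le hpq.le] at hu
      obtain ⟨hu1, hu2⟩ := hu
      rw [abs_le]
      constructor
      · have : x - u ≤ (α + K)/w := by
          have h1 : x - u ≤ x - p := by linarith
          have h2 : x - p = (w*x - kR - a k)/w := by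
            rw [hpdef]; field_simp; ring
          have h3 : w*x - kR - a k ≤ α + K := by
            rw [hαdef]
            linarith [neg_abs_le (kR - w*x), neg_abs_le (a k), (hK k).1]
          calc x - u ≤ (w*x - kR - a k)/w := by rw [← h2]; exact h1
            _ ≤ (α + K)/w := by gcongr
        linarith
      · have h1 : u - x ≤ q - x := by linarith
        have h2 : q - x = (kR - w*x + b k)/w := by
          rw [hqdef]; field_simp; ring
        have h3 : kR - w*x + b k ≤ α + K := by
          have := le_abs_self (kR - w*x)
          have := le_of_abs_le (hK k).2.1
          rw [hαdef]; linarith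
        calc u - x ≤ (kR - w*x + b k)/w := by rw [← h2]; exact h1
          _ ≤ (α + K)/w := by gcongr
    have hv : ∀ v ∈ Set.uIoc r s, |v - y| ≤ (β + K)/w := by
      intro v hv
      rw [Set.uIoc_of_le hrs.le] at hv
      obtain ⟨hv1, hv2⟩ := hv
      rw [abs_le]
      constructor
      · have : y - v ≤ (β + K)/w := by
          have h1 : y - v ≤ y - r := by linarith
          have h2 : y - r = (w*y - jR - c j)/w := by
            rw [hrdef]; field_simp; ring
          have h3 : w*y - jR - c j ≤ β + K := by
            rw [hβdef]
            linarith [neg_abs_le (jR - w*y), neg_abs_le (c j), (hK j).2.2.1]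
          calc y - v ≤ (w*y - jR - c j)/w := by rw [← h2]; exact h1
            _ ≤ (β + K)/w := by gcongr
        linarith
      · have h1 : v - y ≤ s - y := by linarith
        have h2 : s - y = (jR - w*y + d j)/w := by
          rw [hsdef]; field_simp; ring
        have h3 : jR - w*y + d j ≤ β + K := by
          have := le_abs_self (jR - w*y)
          have := le_of_abs_le (hK j).2.2.2
          rw [hβdef]; linarith
        calc v - y ≤ (jR - w*y + d j)/w := by rw [← h2]; exact h1
          _ ≤ (β + K)/w := by gcongr
    have hub : ∀ u ∈ Set.uIoc p q, ∀ v ∈ Set.uIoc r s, |f (u, v) - f (x, y)| ≤ D := by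
      intro u hu' v hv'
      calc |f (u, v) - f (x, y)|
          ≤ ω * (1 + |u - x| / δ₁) * (1 + |v - y| / δ₂) :=
            biModulus_bound f hfb hδ₁ hδ₂ u v x y
        _ ≤ D := by
            rw [hDdef]
            have e1 : 1 + |u - x| / δ₁ ≤ 1 + (α + K)/w/δ₁ := by
              have := hu u hu'; gcongr
            have e2 : 1 + |v - y| / δ₂ ≤ 1 + (β + K)/w/δ₂ := by
              have := hv v hv'; gcongr
            have e3 : ω * (1 + |u - x| / δ₁) ≤ ω * (1 + (α + K)/w/δ₁) :=
              mul_le_mul_of_nonneg_left e1 hω0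
            apply mul_le_mul e3 e2 (by positivity) (by positivity)
    have step1 : ∀ u ∈ Set.uIoc p q,
        ‖∫ v in r..s, (f (u, v) - f (x, y))‖ ≤ D * |s - r| := by
      intro u hu'
      apply intervalIntegral.norm_integral_le_of_norm_le_const
      intro v hv'
      rw [Real.norm_eq_abs]
      exact hub u hu' v hv'
    have step2 : ‖∫ u in p..q, ∫ v in r..s, (f (u, v) - f (x, y))‖
        ≤ D * |s - r| * |q - p| :=
      intervalIntegral.norm_integral_le_of_norm_le_const step1
    have hqp : |q - p| = (b k - a k)/w := by
      rw [abs_of_pos (sub_pos.mpr hpq), hpdef, hqdef]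
      field_simp
      ring
    have hsr : |s - r| = (d j - c j)/w := by
      rw [abs_of_pos (sub_pos.mpr hrs), hrdef, hsdef]
      field_simp
      ring
    have hgabs : |g (k, j)| ≤ |Φ (k, j)| * D := by
      have hco : (0:ℝ) < w ^ 2 / ((b k - a k) * (d j - c j)) := by positivity
      have : |g (k, j)| = (w ^ 2 / ((b k - a k) * (d j - c j))) * |Φ (k, j)| *
          ‖∫ u in p..q, ∫ v in r..s, (f (u, v) - f (x, y))‖ := by
        rw [hgdef]
        simp only [Real.norm_eq_abs, abs_mul]
        rw [abs_of_pos hco]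
      rw [this]
      calc (w ^ 2 / ((b k - a k) * (d j - c j))) * |Φ (k, j)| *
            ‖∫ u in p..q, ∫ v in r..s, (f (u, v) - f (x, y))‖
          ≤ (w ^ 2 / ((b k - a k) * (d j - c j))) * |Φ (k, j)| * (D * |s - r| * |q - p|) := by
            gcongr
        _ = |Φ (k, j)| * D := by
            rw [hqp, hsr]
            field_simp
    refine hgabs.trans (le_of_eq ?_)
    rw [hhdef, hDdef, hEdef, hFdef, hGdef, hHdef]
    simp only
    ring
  -- summability
  have hωh : Summable (fun kj => ω * h kj) := hhsum.mul_left ω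
  have hgsum : Summable g := by
    apply Summable.of_norm_bounded hωh
    intro kj; rw [Real.norm_eq_abs]; exact hgh kj
  have hgabs_sum : Summable (fun kj => |g kj|) :=
    Summable.of_nonneg_of_le (fun kj => abs_nonneg _) hgh hωh
  have hΦf : HasSum (fun kj => Φ kj * f (x, y)) (f (x, y)) := by
    have := (hpu (w*x) (w*y)).mul_right (f (x, y))
    simpa using this
  have hcont2 : ∀ u : ℝ, Continuous (fun v => f (u, v)) := fun u =>
    hfc.comp (Continuous.prodMk_right u)
  have hTg : ∀ kj : ℤ × ℤ,
      (w ^ 2 / ((b kj.1 - a kj.1) * (d kj.2 - c kj.2))) * Φ kj *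
        (∫ u in (((kj.1 : ℝ) + a kj.1) / w)..(((kj.1 : ℝ) + b kj.1) / w),
          ∫ v in (((kj.2 : ℝ) + c kj.2) / w)..(((kj.2 : ℝ) + d kj.2) / w), f (u, v))
        = g kj + Φ kj * f (x, y) := by
    intro kj
    obtain ⟨k, j⟩ := kj
    set kR := (k : ℝ)
    set jR := (j : ℝ)
    set p := (kR + a k) / w with hpdef
    set q := (kR + b k) / w with hqdef
    set r := (jR + c j) / w with hrdef
    set s := (jR + d j) / w with hsdef
    have hba : 0 < b k - a k := sub_pos.mpr (hab k)
    have hdc : 0 < d j - c j := sub_pos.mpr (hcd j)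
    have hin : ∀ u : ℝ, (∫ v in r..s, (f (u, v) - f (x, y)))
        = (∫ v in r..s, f (u, v)) - (s - r) * f (x, y) := by
      intro u
      rw [intervalIntegral.integral_sub ((hcont2 u).intervalIntegrable _ _)
        intervalIntegrable_const, intervalIntegral.integral_const, smul_eq_mul]
    have houtc : Continuous (fun u => ∫ v in r..s, f (u, v)) :=
      intervalIntegral.continuous_parametric_intervalIntegral_of_continuous'
        (f := fun u v => f (u, v)) (by exact hfc) r s
    have hout : (∫ u in p..q, ∫ v in r..s, (f (u, v) - f (x, y)))
        = (∫ u in p..q, ∫ v in r..s, f (u, v)) - (q - p) * ((s - r) * f (x, y)) := by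
      rw [intervalIntegral.integral_congr
        (g := fun u => (∫ v in r..s, f (u, v)) - (s - r) * f (x, y)) (fun u _ => hin u),
        intervalIntegral.integral_sub (houtc.intervalIntegrable _ _)
        intervalIntegrable_const, intervalIntegral.integral_const, smul_eq_mul]
    have hgval : g (k, j) = (w ^ 2 / ((b k - a k) * (d j - c j))) * Φ (k, j) *
        ((∫ u in p..q, ∫ v in r..s, f (u, v)) - (q - p) * ((s - r) * f (x, y))) := by
      rw [hgdef]
      simp only
      rw [hout]
    rw [hgval]
    have h1 : q - p = (b k - a k)/w := by rw [hpdef, hqdef]; field_simp; ring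
    have h2 : s - r = (d j - c j)/w := by rw [hrdef, hsdef]; field_simp; ring
    rw [h1, h2]
    field_simp
    ring
  have hkan : kantorovich φ a b c d f w x y = (∑' kj, g kj) + f (x, y) := by
    rw [kantorovich, tsum_congr hTg]
    exact (hgsum.hasSum.add hΦf).tsum_eq
  rw [hkan, add_sub_cancel_right]
  have hM₁₀0 : 0 ≤ M₁₀ := le_trans (tsum_nonneg fun kj => by positivity) hT10
  have hM₀₁0 : 0 ≤ M₀₁ := le_trans (tsum_nonneg fun kj => by positivity) hT01
  calc |∑' kj, g kj| ≤ ∑' kj, |g kj| := by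
        have h1 : Summable (fun kj => ‖g kj‖) := hgabs_sum
        have h2 := norm_tsum_le_tsum_norm h1
        simpa only [Real.norm_eq_abs] using h2
    _ ≤ ∑' kj, ω * h kj := Summable.tsum_le_tsum hgh hgabs_sum hωh
    _ = ω * ∑' kj, h kj := tsum_mul_left
    _ = ω * ((∑' kj, |Φ kj|) * E + (∑' kj : ℤ × ℤ, |Φ kj| * |(kj.1:ℝ) - w*x|) * F
          + (∑' kj : ℤ × ℤ, |Φ kj| * |(kj.2:ℝ) - w*y|) * G
          + (∑' kj : ℤ × ℤ, |Φ kj| * |(kj.1:ℝ) - w*x| * |(kj.2:ℝ) - w*y|) * H) := by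
        congr 1
        exact ((((hS0.hasSum.mul_right E).add (hS10.hasSum.mul_right F)).add
          (hS01.hasSum.mul_right G)).add (hS11.hasSum.mul_right H)).tsum_eq
    _ ≤ ω * (M₀ * E + M₁₀ * F + M₀₁ * G + M₁₁ * H) := by
        apply mul_le_mul_of_nonneg_left ?_ hω0
        have e0 := mul_le_mul_of_nonneg_right hT0 hE0
        have e1 := mul_le_mul_of_nonneg_right hT10 hF0
        have e2 := mul_le_mul_of_nonneg_right hT01 hG0
        have e3 := mul_le_mul_of_nonneg_right hT11 hH0
        linarith
    _ ≤ ω * (M₀ + (K * M₀ / w) * (1 / δ₁ + 1 / δ₂ + K / (w * δ₁ * δ₂))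
          + (1 / w) * (M₁₀ + M₀₁) * (1 / δ₁ + 1 / δ₂)
          + (1 / (w ^ 2 * δ₁ * δ₂)) * (K * (M₁₀ + M₀₁) + M₁₁)) := by
        apply mul_le_mul_of_nonneg_left ?_ hω0
        have expand := bracket_expand M₀ M₁₀ M₀₁ M₁₁ K w δ₁ δ₂ hw.ne' hδ₁.ne' hδ₂.ne'
        have n1 : 0 ≤ M₁₀ * (1/(w*δ₂)) := by positivity
        have n2 : 0 ≤ M₀₁ * (1/(w*δ₁)) := by positivity
        rw [hEdef, hFdef, hGdef, hHdef]
        linarith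
end

section
/- (Taylor remainder estimate) Let f ∈ C¹(ℝ²) (continuously differentiable with bounded uniformly continuous partials). For (x₀,y₀), (x,y) ∈ ℝ², let R₁(f) := f(x,y) − f(x₀,y₀) − ∂f/∂x(x₀,y₀)(x−x₀) − ∂f/∂y(x₀,y₀)(y−y₀) be the first-order Taylor remainder. Then |R₁(f)| ≤ |x−x₀|·ω̄(∂f/∂x, |x−x₀|) + |y−y₀|·ω̄(∂f/∂y, |y−y₀|), where ω̄(g, ·) denotes the least concave majorant of the modulus of continuity of g. -/
/-- Modulus of continuity of `g : ℝ² → ℝ` with respect to the norm on `ℝ²`. -/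
noncomputable def modulus2 (g : ℝ × ℝ → ℝ) (δ : ℝ) : ℝ :=
  sSup {r : ℝ | ∃ p q : ℝ × ℝ, ‖p - q‖ ≤ δ ∧ r = |g p - g q|}

/-- The least concave majorant (on `[0,∞)`) of a function `ω : ℝ → ℝ`,
evaluated at `t`: the infimum over concave majorants `F` of `F t`. -/
noncomputable def leastConcaveMajorant (ω : ℝ → ℝ) (t : ℝ) : ℝ :=
  sInf {y : ℝ | ∃ F : ℝ → ℝ, ConcaveOn ℝ (Set.Ici 0) F ∧
    (∀ s : ℝ, 0 ≤ s → ω s ≤ F s) ∧ y = F t}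

lemma abs_sub_le_of_uIcc {a b t : ℝ} (h : t ∈ Set.uIcc a b) : |t - a| ≤ |b - a| := by
  rw [Set.mem_uIcc] at h
  have h1 := le_abs_self (b - a)
  have h2 := neg_abs_le (b - a)
  rw [abs_sub_le_iff]
  rcases h with ⟨ha, hb⟩ | ⟨ha, hb⟩ <;> constructor <;> linarith

lemma modulus2_ub {g : ℝ × ℝ → ℝ} {C : ℝ} (hb : ∀ p, |g p| ≤ C) (δ : ℝ) :
    ∀ r ∈ {r : ℝ | ∃ p q : ℝ × ℝ, ‖p - q‖ ≤ δ ∧ r = |g p - g q|}, r ≤ 2 * C := by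
  rintro r ⟨p, q, -, rfl⟩
  have h1 := hb p
  have h2 := hb q
  have := abs_sub (g p) (g q)
  linarith

lemma le_modulus2 {g : ℝ × ℝ → ℝ} {C : ℝ} (hb : ∀ p, |g p| ≤ C) {δ : ℝ} {p q : ℝ × ℝ}
    (h : ‖p - q‖ ≤ δ) : |g p - g q| ≤ modulus2 g δ :=
  le_csSup ⟨2 * C, modulus2_ub hb δ⟩ ⟨p, q, h, rfl⟩

lemma modulus2_le {g : ℝ × ℝ → ℝ} {C : ℝ} (hb : ∀ p, |g p| ≤ C) (δ : ℝ) :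
    modulus2 g δ ≤ 2 * C := by
  have h0 := hb (0, 0)
  have := abs_nonneg (g (0, 0))
  exact Real.sSup_le (modulus2_ub hb δ) (by linarith)

lemma le_lcm {ω : ℝ → ℝ} {C t : ℝ} (hub : ∀ s, ω s ≤ C) (ht : 0 ≤ t) :
    ω t ≤ leastConcaveMajorant ω t := by
  unfold leastConcaveMajorant
  apply le_csInf
  · exact ⟨C, fun _ => C, concaveOn_const C (convex_Ici 0), fun s _ => hub s, rfl⟩
  · rintro y ⟨F, _, hdom, rfl⟩
    exact hdom t ht

lemma horiz {f : ℝ × ℝ → ℝ} {f' : ℝ × ℝ → ℝ × ℝ →L[ℝ] ℝ}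
    (hf : ∀ p, HasFDerivAt f (f' p) p) (Y c M a b : ℝ)
    (hM : ∀ t ∈ Set.uIcc a b, |f' (t, Y) (1, 0) - c| ≤ M) :
    |f (b, Y) - f (a, Y) - c * (b - a)| ≤ M * |b - a| := by
  have hd : ∀ t ∈ Set.uIcc a b,
      HasDerivWithinAt (fun t : ℝ => f (t, Y) - c * t) (f' (t, Y) (1, 0) - c)
        (Set.uIcc a b) t := by
    intro t _
    have h1 : HasDerivAt (fun t : ℝ => ((t, Y) : ℝ × ℝ)) ((1 : ℝ), (0 : ℝ)) t :=
      HasDerivAt.prodMk (hasDerivAt_id t) (hasDerivAt_const t Y)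
    have h2 : HasDerivAt (fun t : ℝ => f (t, Y)) (f' (t, Y) (1, 0)) t :=
      (hf (t, Y)).comp_hasDerivAt t h1
    have h3 : HasDerivAt (fun t : ℝ => c * t) c t := by
      simpa using (hasDerivAt_id t).const_mul c
    exact (h2.sub h3).hasDerivWithinAt
  have key := (convex_uIcc a b).norm_image_sub_le_of_norm_hasDerivWithin_le hd
    (fun t ht => by simpa [Real.norm_eq_abs] using hM t ht)
    Set.left_mem_uIcc Set.right_mem_uIcc
  calc |f (b, Y) - f (a, Y) - c * (b - a)|
      = ‖(f (b, Y) - c * b) - (f (a, Y) - c * a)‖ := by rw [Real.norm_eq_abs]; ring_nf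
    _ ≤ M * ‖b - a‖ := key
    _ = M * |b - a| := by rw [Real.norm_eq_abs]

lemma vert {f : ℝ × ℝ → ℝ} {f' : ℝ × ℝ → ℝ × ℝ →L[ℝ] ℝ}
    (hf : ∀ p, HasFDerivAt f (f' p) p) (X c M a b : ℝ)
    (hM : ∀ t ∈ Set.uIcc a b, |f' (X, t) (0, 1) - c| ≤ M) :
    |f (X, b) - f (X, a) - c * (b - a)| ≤ M * |b - a| := by
  have hd : ∀ t ∈ Set.uIcc a b,
      HasDerivWithinAt (fun t : ℝ => f (X, t) - c * t) (f' (X, t) (0, 1) - c)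
        (Set.uIcc a b) t := by
    intro t _
    have h1 : HasDerivAt (fun t : ℝ => ((X, t) : ℝ × ℝ)) ((0 : ℝ), (1 : ℝ)) t :=
      HasDerivAt.prodMk (hasDerivAt_const t X) (hasDerivAt_id t)
    have h2 : HasDerivAt (fun t : ℝ => f (X, t)) (f' (X, t) (0, 1)) t :=
      (hf (X, t)).comp_hasDerivAt t h1
    have h3 : HasDerivAt (fun t : ℝ => c * t) c t := by
      simpa using (hasDerivAt_id t).const_mul c
    exact (h2.sub h3).hasDerivWithinAt
  have key := (convex_uIcc a b).norm_image_sub_le_of_norm_hasDerivWithin_le hd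
    (fun t ht => by simpa [Real.norm_eq_abs] using hM t ht)
    Set.left_mem_uIcc Set.right_mem_uIcc
  calc |f (X, b) - f (X, a) - c * (b - a)|
      = ‖(f (X, b) - c * b) - (f (X, a) - c * a)‖ := by rw [Real.norm_eq_abs]; ring_nf
    _ ≤ M * ‖b - a‖ := key
    _ = M * |b - a| := by rw [Real.norm_eq_abs]

/-- estimate of the first-order Taylor remainder of an `f ∈ C¹(ℝ²)`
via the least concave majorants of the moduli of continuity of its partials. -/
theorem taylor_remainder_estimate
    (f : ℝ × ℝ → ℝ) (f' : ℝ × ℝ → ℝ × ℝ →L[ℝ] ℝ)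
    (hf : ∀ p, HasFDerivAt f (f' p) p)
    (hbx : ∃ C, ∀ p, |f' p (1, 0)| ≤ C) (hby : ∃ C, ∀ p, |f' p (0, 1)| ≤ C)
    (hux : UniformContinuous fun p => f' p (1, 0))
    (huy : UniformContinuous fun p => f' p (0, 1))
    (x₀ y₀ x y : ℝ) :
    |f (x, y) - f (x₀, y₀) - f' (x₀, y₀) (1, 0) * (x - x₀) - f' (x₀, y₀) (0, 1) * (y - y₀)|
      ≤ |x - x₀| * leastConcaveMajorant (modulus2 fun p => f' p (1, 0)) |x - x₀|
        + |y - y₀| * leastConcaveMajorant (modulus2 fun p => f' p (0, 1)) |y - y₀| := by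
  obtain ⟨Cx, hCx⟩ := hbx
  obtain ⟨Cy, hCy⟩ := hby
  set cx := f' (x₀, y₀) (1, 0) with hcx
  set cy := f' (x₀, y₀) (0, 1) with hcy
  set Mx := modulus2 (fun p => f' p (1, 0)) |x - x₀| with hMx
  set My := modulus2 (fun p => f' p (0, 1)) |y - y₀| with hMy
  have hLx : Mx ≤ leastConcaveMajorant (modulus2 fun p => f' p (1, 0)) |x - x₀| :=
    le_lcm (fun s => modulus2_le hCx s) (abs_nonneg _)
  have hLy : My ≤ leastConcaveMajorant (modulus2 fun p => f' p (0, 1)) |y - y₀| :=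
    le_lcm (fun s => modulus2_le hCy s) (abs_nonneg _)
  have hux' : 0 ≤ |x - x₀| := abs_nonneg _
  have huy' : 0 ≤ |y - y₀| := abs_nonneg _
  have main : |f (x, y) - f (x₀, y₀) - cx * (x - x₀) - cy * (y - y₀)|
      ≤ Mx * |x - x₀| + My * |y - y₀| := by
    rcases le_total |y - y₀| |x - x₀| with hc | hc
    · -- go horizontally at height y, then vertically at x₀
      have hA : |f (x, y) - f (x₀, y) - cx * (x - x₀)| ≤ Mx * |x - x₀| := by
        apply horiz hf y cx Mx x₀ x
        intro t ht
        apply le_modulus2 hCx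
        have h1 : |t - x₀| ≤ |x - x₀| := abs_sub_le_of_uIcc ht
        have : ((t, y) : ℝ × ℝ) - (x₀, y₀) = (t - x₀, y - y₀) := rfl
        rw [this, Prod.norm_def]
        simp only [Real.norm_eq_abs]
        exact max_le h1 hc
      have hB : |f (x₀, y) - f (x₀, y₀) - cy * (y - y₀)| ≤ My * |y - y₀| := by
        apply vert hf x₀ cy My y₀ y
        intro t ht
        apply le_modulus2 hCy
        have h1 : |t - y₀| ≤ |y - y₀| := abs_sub_le_of_uIcc ht
        have : ((x₀, t) : ℝ × ℝ) - (x₀, y₀) = (0, t - y₀) := by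
          simp [Prod.ext_iff]
        rw [this, Prod.norm_def]
        simp only [Real.norm_eq_abs, abs_zero]
        exact max_le (by positivity) h1
      calc |f (x, y) - f (x₀, y₀) - cx * (x - x₀) - cy * (y - y₀)|
          = |(f (x, y) - f (x₀, y) - cx * (x - x₀)) + (f (x₀, y) - f (x₀, y₀) - cy * (y - y₀))| := by
            ring_nf
        _ ≤ |f (x, y) - f (x₀, y) - cx * (x - x₀)| + |f (x₀, y) - f (x₀, y₀) - cy * (y - y₀)| :=
            abs_add_le _ _
        _ ≤ Mx * |x - x₀| + My * |y - y₀| := add_le_add hA hB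
    · -- go horizontally at height y₀, then vertically at x
      have hA : |f (x, y₀) - f (x₀, y₀) - cx * (x - x₀)| ≤ Mx * |x - x₀| := by
        apply horiz hf y₀ cx Mx x₀ x
        intro t ht
        apply le_modulus2 hCx
        have h1 : |t - x₀| ≤ |x - x₀| := abs_sub_le_of_uIcc ht
        have : ((t, y₀) : ℝ × ℝ) - (x₀, y₀) = (t - x₀, 0) := by
          simp [Prod.ext_iff]
        rw [this, Prod.norm_def]
        simp only [Real.norm_eq_abs, abs_zero]
        exact max_le h1 (by positivity)
      have hB : |f (x, y) - f (x, y₀) - cy * (y - y₀)| ≤ My * |y - y₀| := by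
        apply vert hf x cy My y₀ y
        intro t ht
        apply le_modulus2 hCy
        have h1 : |t - y₀| ≤ |y - y₀| := abs_sub_le_of_uIcc ht
        have : ((x, t) : ℝ × ℝ) - (x₀, y₀) = (x - x₀, t - y₀) := rfl
        rw [this, Prod.norm_def]
        simp only [Real.norm_eq_abs]
        exact max_le hc h1
      calc |f (x, y) - f (x₀, y₀) - cx * (x - x₀) - cy * (y - y₀)|
          = |(f (x, y₀) - f (x₀, y₀) - cx * (x - x₀)) + (f (x, y) - f (x, y₀) - cy * (y - y₀))| := by
            ring_nf
        _ ≤ |f (x, y₀) - f (x₀, y₀) - cx * (x - x₀)| + |f (x, y) - f (x, y₀) - cy * (y - y₀)| :=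
            abs_add_le _ _
        _ ≤ Mx * |x - x₀| + My * |y - y₀| := add_le_add hA hB
  calc |f (x, y) - f (x₀, y₀) - cx * (x - x₀) - cy * (y - y₀)|
      ≤ Mx * |x - x₀| + My * |y - y₀| := main
    _ ≤ |x - x₀| * leastConcaveMajorant (modulus2 fun p => f' p (1, 0)) |x - x₀|
        + |y - y₀| * leastConcaveMajorant (modulus2 fun p => f' p (0, 1)) |y - y₀| := by
        have := mul_le_mul_of_nonneg_left hLx hux'
        have := mul_le_mul_of_nonneg_left hLy huy'
        nlinarith [mul_comm Mx |x - x₀|, mul_comm My |y - y₀|]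
end
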